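/- arXiv:2108.12303 — 9 statements merged into one kernel-verified Lean document; each statement's English description precedes it below -/
import Mathlib

section
/- Let n ∈ ℕ, let a ∈ ℝⁿ with aᵢ > 0 for all i, let c ∈ ℝⁿ, and let n' ∈ {0,…,n} be such that c₁/a₁ > c₂/a₂ > … > c_{n'}/a_{n'} > 0 and cᵢ < 0 for all i > n'. For b ∈ [0, Σ_{i=1}^n aᵢ], define x(b) ∈ ℝⁿ by xᵢ(b) = min(1, max(0, (b − Σ_{j=1}^{i−1} aⱼ)/aᵢ)) for i ≤ n' and xᵢ(b) = 0 for i > n'. Then x(b) is feasible (i.e. x(b) ∈ [0,1]ⁿ and aᵀx(b) ≤ b) and is an optimal solution of the continuous knapsack problem max{cᵀx : aᵀx ≤ b, x ∈ [0,1]ⁿ}. -/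
/-!
Write `F k` for the total size of the first `k` items. Item `i < n'` of the greedy solution
contributes `aᵢ xᵢ(b) = min b (F (i+1)) - min b (F i)`, so `aᵀx(b)` telescopes to
`min b (F n') ≤ b`. Optimality is a Lagrangian certificate: with `μ = 0` if all profitable
items fit, and otherwise `μ = c_k / a_k` for the item `k` that is split (`F k ≤ b < F (k+1)`),
the greedy solution takes every item with `cᵢ > μ aᵢ` fully, none with `cᵢ < μ aᵢ`, and
fills the knapsack whenever `μ > 0`.
-/

open Finset

theorem sum_mul_le_sum_mul_of_lagrange {ι : Type*} [Fintype ι] {a c x y : ι → ℝ} {b μ : ℝ}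
    (hμ : 0 ≤ μ) (hy : ∀ i, 0 ≤ y i ∧ y i ≤ 1) (hay : ∑ i, a i * y i ≤ b)
    (hslack : μ * ∑ i, a i * x i = μ * b)
    (hone : ∀ i, μ * a i < c i → x i = 1) (hzero : ∀ i, c i < μ * a i → x i = 0) :
    ∑ i, c i * y i ≤ ∑ i, c i * x i := by
  have hterm : ∀ i, (c i - μ * a i) * y i ≤ (c i - μ * a i) * x i := by
    intro i
    rcases lt_trichotomy (μ * a i) (c i) with h | h | h
    · rw [hone i h, mul_one]
      exact mul_le_of_le_one_right (by linarith) (hy i).2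
    · simp [h]
    · rw [hzero i h, mul_zero]
      exact mul_nonpos_of_nonpos_of_nonneg (by linarith) (hy i).1
  have hsplit : ∀ z : ι → ℝ, ∑ i, c i * z i = ∑ i, (c i - μ * a i) * z i + μ * ∑ i, a i * z i := by
    intro z
    rw [mul_sum, ← sum_add_distrib]
    exact sum_congr rfl fun i _ => by ring
  rw [hsplit y, hsplit x, hslack]
  exact add_le_add (sum_le_sum fun i _ => hterm i) (mul_le_mul_of_nonneg_left hay hμ)

theorem exists_le_lt_succ_of_le_of_lt {F : ℕ → ℝ} {b : ℝ} (h0 : F 0 ≤ b) {m : ℕ}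
    (hm : b < F m) : ∃ k < m, F k ≤ b ∧ b < F (k + 1) := by
  induction m with
  | zero => exact absurd h0 hm.not_ge
  | succ m ih =>
    by_cases h : b < F m
    · obtain ⟨k, hk, hFk⟩ := ih h
      exact ⟨k, hk.trans m.lt_succ_self, hFk⟩
    · exact ⟨m, m.lt_succ_self, le_of_not_gt h, hm⟩

theorem mul_min_one_max_zero_div {A F b : ℝ} (hA : 0 < A) :
    A * min 1 (max 0 ((b - F) / A)) = min b (F + A) - min b F := by
  rw [mul_min_of_nonneg _ _ hA.le, mul_max_of_nonneg _ _ hA.le, mul_div_cancel₀ _ hA.ne',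
    mul_one, mul_zero]
  rcases le_total b F with h | h
  · rw [max_eq_left (by linarith), min_eq_right hA.le, min_eq_left h, min_eq_left (by linarith)]
    ring
  rcases le_total b (F + A) with h' | h'
  · rw [max_eq_right (by linarith), min_eq_right (by linarith), min_eq_left h', min_eq_right h]
  · rw [max_eq_right (by linarith), min_eq_left (by linarith), min_eq_right h', min_eq_right h]
    ring

namespace ContinuousKnapsack

variable {n : ℕ} (a : Fin n → ℝ)

def prefixSum (k : ℕ) : ℝ :=
  ∑ j ∈ univ.filter (fun j : Fin n => (j : ℕ) < k), a j

noncomputable def greedy (n' : ℕ) (b : ℝ) (i : Fin n) : ℝ :=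
  if (i : ℕ) < n' then min 1 (max 0 ((b - prefixSum a i) / a i)) else 0

@[simp]
theorem prefixSum_zero : prefixSum a 0 = 0 := by
  simp [prefixSum]

theorem prefixSum_succ (i : Fin n) : prefixSum a (i + 1) = prefixSum a i + a i := by
  have hins : univ.filter (fun j : Fin n => (j : ℕ) < i + 1)
      = insert i (univ.filter (fun j : Fin n => (j : ℕ) < i)) := by
    ext j
    simp only [mem_insert, mem_filter, mem_univ, true_and, Fin.ext_iff]
    omega
  rw [prefixSum, hins, sum_insert (by simp), add_comm]
  rfl

variable {a}

theorem prefixSum_mono (ha : ∀ i, 0 ≤ a i) : Monotone (prefixSum a) :=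
  fun _ _ hkm => sum_le_sum_of_subset_of_nonneg
    (monotone_filter_right _ fun _ _ hj => lt_of_lt_of_le hj hkm) fun j _ _ => ha j

variable {n' : ℕ} {b : ℝ}

theorem greedy_mem_Icc (i : Fin n) : greedy a n' b i ∈ Set.Icc 0 1 := by
  unfold greedy
  split_ifs
  · exact ⟨le_min zero_le_one (le_max_left _ _), min_le_left _ _⟩
  · exact ⟨le_rfl, zero_le_one⟩

theorem greedy_eq_one (ha : ∀ i, 0 < a i) {i : Fin n} (hi : (i : ℕ) < n')
    (h : prefixSum a (i + 1) ≤ b) : greedy a n' b i = 1 := by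
  rw [prefixSum_succ] at h
  have : 1 ≤ (b - prefixSum a i) / a i := by
    rw [le_div_iff₀ (ha i)]
    linarith
  rw [greedy, if_pos hi, max_eq_right (zero_le_one.trans this), min_eq_left this]

theorem greedy_eq_zero (ha : ∀ i, 0 < a i) {i : Fin n} (h : b ≤ prefixSum a i) :
    greedy a n' b i = 0 := by
  unfold greedy
  split_ifs
  · rw [max_eq_left (div_nonpos_of_nonpos_of_nonneg (by linarith) (ha i).le),
      min_eq_right zero_le_one]
  · rfl

theorem greedy_of_le {i : Fin n} (hi : n' ≤ (i : ℕ)) : greedy a n' b i = 0 :=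
  if_neg hi.not_gt

theorem mul_greedy (ha : ∀ i, 0 < a i) (i : Fin n) :
    a i * greedy a n' b i
      = min b (prefixSum a (min (i + 1) n')) - min b (prefixSum a (min i n')) := by
  by_cases hi : (i : ℕ) < n'
  · rw [greedy, if_pos hi, min_eq_left (show (i : ℕ) + 1 ≤ n' from hi), min_eq_left hi.le,
      prefixSum_succ,
      mul_min_one_max_zero_div (ha i)]
  · rw [greedy, if_neg hi, min_eq_right (show n' ≤ (i : ℕ) + 1 by omega),
      min_eq_right (show n' ≤ (i : ℕ) by omega)]
    ring

theorem sum_mul_greedy (ha : ∀ i, 0 < a i) (hn' : n' ≤ n) (hb : 0 ≤ b) :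
    ∑ i, a i * greedy a n' b i = min b (prefixSum a n') := by
  simp_rw [mul_greedy ha]
  rw [Fin.sum_univ_eq_sum_range (fun k => min b (prefixSum a (min (k + 1) n'))
    - min b (prefixSum a (min k n'))), sum_range_sub (fun k => min b (prefixSum a (min k n'))),
    min_eq_right hn']
  simp [hb]

variable {c : Fin n → ℝ}

theorem val_lt_of_div_lt_div
    (hsort : ∀ i j : Fin n, (i : ℕ) < (j : ℕ) → (j : ℕ) < n' → c j / a j < c i / a i)
    (hpos : ∀ i : Fin n, (i : ℕ) < n' → 0 < c i / a i)
    (hneg : ∀ i : Fin n, n' ≤ (i : ℕ) → c i < 0) (ha : ∀ i, 0 < a i)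
    {i j : Fin n} (hj : (j : ℕ) < n') (h : c j / a j < c i / a i) : (i : ℕ) < j := by
  by_contra! hji
  rcases hji.eq_or_lt with hji | hji
  · exact h.ne (congrArg (fun k => c k / a k) (Fin.ext hji))
  by_cases hi : (i : ℕ) < n'
  · exact (hsort j i hji hi).not_gt h
  · have : c i / a i < 0 := div_neg_of_neg_of_pos (hneg i (not_lt.1 hi)) (ha i)
    linarith [hpos j hj]

theorem val_lt_of_div_lt_div'
    (hsort : ∀ i j : Fin n, (i : ℕ) < (j : ℕ) → (j : ℕ) < n' → c j / a j < c i / a i)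
    {i j : Fin n} (hi : (i : ℕ) < n') (h : c j / a j < c i / a i) : (i : ℕ) < j := by
  by_contra! hji
  rcases hji.eq_or_lt with hji | hji
  · exact h.ne (congrArg (fun k => c k / a k) (Fin.ext hji))
  · exact (hsort j i hji hi).not_gt h

end ContinuousKnapsack

open ContinuousKnapsack in
theorem stmt_0_general (n : ℕ) (a c : Fin n → ℝ) (ha : ∀ i, 0 < a i)
    (n' : ℕ) (hn' : n' ≤ n)
    (hsort : ∀ i j : Fin n, (i : ℕ) < (j : ℕ) → (j : ℕ) < n' → c j / a j < c i / a i)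
    (hpos : ∀ i : Fin n, (i : ℕ) < n' → 0 < c i / a i)
    (hneg : ∀ i : Fin n, n' ≤ (i : ℕ) → c i < 0)
    (b : ℝ) (hb : 0 ≤ b)
    (x : Fin n → ℝ)
    (hx : ∀ i : Fin n, x i =
      if (i : ℕ) < n' then
        min 1 (max 0
          ((b - ∑ j ∈ Finset.univ.filter (fun j : Fin n => (j : ℕ) < (i : ℕ)), a j) / a i))
      else 0) :
    ((∀ i, 0 ≤ x i ∧ x i ≤ 1) ∧ ∑ i, a i * x i ≤ b) ∧
      ∀ y : Fin n → ℝ, (∀ i, 0 ≤ y i ∧ y i ≤ 1) → ∑ i, a i * y i ≤ b →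
        ∑ i, c i * y i ≤ ∑ i, c i * x i := by
  obtain rfl : x = greedy a n' b := funext hx
  have hsum := sum_mul_greedy ha hn' hb
  refine ⟨⟨greedy_mem_Icc, hsum ▸ min_le_left _ _⟩, fun y hy hay => ?_⟩
  have hmono := prefixSum_mono fun i => (ha i).le
  by_cases hfit : prefixSum a n' ≤ b
  · refine sum_mul_le_sum_mul_of_lagrange le_rfl hy hay (by simp) (fun i hi => ?_) fun i hi => ?_
    · have hin : (i : ℕ) < n' := lt_of_not_ge fun h => (hneg i h).not_gt (by simpa using hi)
      exact greedy_eq_one ha hin ((hmono hin).trans hfit)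
    · refine greedy_of_le (le_of_not_gt fun h => ?_)
      exact (div_pos_iff_of_pos_right (ha i)).1 (hpos i h) |>.not_gt (by simpa using hi)
  · obtain ⟨k, hk, hFk, hbk⟩ := exists_le_lt_succ_of_le_of_lt (by simpa using hb) (not_le.1 hfit)
    set ik : Fin n := ⟨k, hk.trans_le hn'⟩
    refine sum_mul_le_sum_mul_of_lagrange (hpos ik hk).le hy hay
      (by rw [hsum, min_eq_left (not_le.1 hfit).le]) (fun i hi => ?_) fun i hi => ?_
    · have hik := val_lt_of_div_lt_div hsort hpos hneg ha (j := ik) hk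
        ((lt_div_iff₀ (ha i)).2 hi)
      exact greedy_eq_one ha (hik.trans hk) ((hmono hik).trans hFk)
    · have hki := val_lt_of_div_lt_div' hsort (i := ik) hk ((div_lt_iff₀ (ha i)).2 hi)
      exact greedy_eq_zero ha (hbk.le.trans (hmono hki))

/-- The greedy solution of the continuous knapsack problem (items sorted by
decreasing positive profit ratios, the remaining items having negative value)
is feasible and optimal. -/
theorem stmt_0 (n : ℕ) (a c : Fin n → ℝ) (ha : ∀ i, 0 < a i)
    (n' : ℕ) (hn' : n' ≤ n)
    (hsort : ∀ i j : Fin n, (i : ℕ) < (j : ℕ) → (j : ℕ) < n' → c j / a j < c i / a i)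
    (hpos : ∀ i : Fin n, (i : ℕ) < n' → 0 < c i / a i)
    (hneg : ∀ i : Fin n, n' ≤ (i : ℕ) → c i < 0)
    (b : ℝ) (hb : 0 ≤ b) (hbA : b ≤ ∑ i, a i)
    (x : Fin n → ℝ)
    (hx : ∀ i : Fin n, x i =
      if (i : ℕ) < n' then
        min 1 (max 0
          ((b - ∑ j ∈ Finset.univ.filter (fun j : Fin n => (j : ℕ) < (i : ℕ)), a j) / a i))
      else 0) :
    ((∀ i, 0 ≤ x i ∧ x i ≤ 1) ∧ ∑ i, a i * x i ≤ b) ∧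
      ∀ y : Fin n → ℝ, (∀ i, 0 ≤ y i ∧ y i ≤ 1) → ∑ i, a i * y i ≤ b →
        ∑ i, c i * y i ≤ ∑ i, c i * x i :=
  stmt_0_general n a c ha n' hn' hsort hpos hneg b hb x hx
end

section
/- Let n ∈ ℕ, let a ∈ ℝⁿ with aᵢ > 0 for all i, and let c ∈ ℝⁿ be such that cᵢ ≠ 0 for all i and cᵢ/aᵢ ≠ cⱼ/aⱼ for all i ≠ j. Then for every b ∈ [0, Σ_{i=1}^n aᵢ], the continuous knapsack problem max{cᵀx : aᵀx ≤ b, x ∈ [0,1]ⁿ} has a unique optimal solution. -/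
/-!
At an optimum `z` of `c ⬝ᵥ ·`, every perturbation `z + t • d` that stays feasible for all small
`t` of both signs has `c ⬝ᵥ d = 0`. With free capacity, moving one fractional coordinate is such a
perturbation, so `c k ≠ 0` forbids fractional coordinates; moving weight between two fractional
coordinates `i ≠ j` along `a j • eᵢ - a i • eⱼ` is another, so distinct profits forbid two of
them. If `x ≠ y` were both optimal, their midpoint would be optimal with a fractional coordinate;
so the capacity is tight at the midpoint, hence at `x` and `y`, and `a ⬝ᵥ (x - y) = 0` with
`a > 0` makes `x - y` change sign, giving two fractional coordinates of the midpoint.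
-/

open Filter Set Topology

variable {ι : Type*} [Fintype ι]

def knapsackFeasible (a : ι → ℝ) (b : ℝ) : Set (ι → ℝ) :=
  {x | (∀ i, x i ∈ Icc 0 1) ∧ a ⬝ᵥ x ≤ b}

lemma knapsackFeasible_eq (a : ι → ℝ) (b : ℝ) :
    knapsackFeasible a b = univ.pi (fun _ => Icc 0 1) ∩ {x | a ⬝ᵥ x ≤ b} := by
  ext x
  simp only [knapsackFeasible, mem_inter_iff, mem_univ_pi, mem_ofPred_eq]

lemma isCompact_knapsackFeasible (a : ι → ℝ) (b : ℝ) : IsCompact (knapsackFeasible a b) := by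
  rw [knapsackFeasible_eq]
  exact (isCompact_univ_pi fun _ => isCompact_Icc).inter_right
    (isClosed_le (continuous_const.dotProduct continuous_id) continuous_const)

lemma convex_knapsackFeasible (a : ι → ℝ) (b : ℝ) : Convex ℝ (knapsackFeasible a b) := by
  rw [knapsackFeasible_eq]
  exact (convex_pi fun _ _ => convex_Icc 0 1).inter
    (convex_halfSpace_le (dotProductBilin ℝ ℝ a).isLinear b)

lemma exists_isMaxOn_knapsackFeasible (a c : ι → ℝ) {b : ℝ} (hb : 0 ≤ b) :
    ∃ x ∈ knapsackFeasible a b, IsMaxOn (c ⬝ᵥ ·) (knapsackFeasible a b) x :=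
  (isCompact_knapsackFeasible a b).exists_isMaxOn
    ⟨0, fun _ => ⟨le_rfl, zero_le_one⟩, by simpa using hb⟩
    (continuous_const.dotProduct continuous_id).continuousOn

lemma dotProduct_eq_zero_of_isMaxOn {c z d : ι → ℝ} {S : Set (ι → ℝ)}
    (hz : IsMaxOn (c ⬝ᵥ ·) S z) (hd : ∀ᶠ t in 𝓝 (0 : ℝ), z + t • d ∈ S) : c ⬝ᵥ d = 0 := by
  have hmax : IsLocalMax (fun t : ℝ => c ⬝ᵥ (z + t • d)) 0 :=
    hd.mono fun t ht => by simpa using hz ht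
  refine hmax.hasDerivAt_eq_zero ?_
  simpa [dotProduct_add, dotProduct_smul] using
    ((hasDerivAt_id (0 : ℝ)).mul_const (c ⬝ᵥ d)).const_add (c ⬝ᵥ z)

lemma eventually_add_smul_mem_Icc {z d : ι → ℝ} (hz : ∀ i, z i ∈ Icc 0 1)
    (hd : ∀ i, d i ≠ 0 → z i ∈ Ioo 0 1) :
    ∀ᶠ t in 𝓝 (0 : ℝ), ∀ i, (z + t • d) i ∈ Icc 0 1 := by
  refine eventually_all.2 fun i => ?_
  by_cases hdi : d i = 0
  · exact Eventually.of_forall fun t => by simpa [hdi] using hz i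
  have hcont : Tendsto (fun t : ℝ => z i + t * d i) (𝓝 0) (𝓝 (z i)) := by
    simpa using (by fun_prop : Continuous fun t : ℝ => z i + t * d i).tendsto 0
  exact (hcont.eventually (Ioo_mem_nhds (hd i hdi).1 (hd i hdi).2)).mono
    fun t ht => by simpa using Ioo_subset_Icc_self ht

variable {a c z : ι → ℝ} {b : ℝ}

lemma notMem_Ioo_of_isMaxOn_of_lt [DecidableEq ι] (hc : ∀ i, c i ≠ 0)
    (hz : z ∈ knapsackFeasible a b) (hmax : IsMaxOn (c ⬝ᵥ ·) (knapsackFeasible a b) z)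
    (hslack : a ⬝ᵥ z < b) (k : ι) : z k ∉ Ioo 0 1 := by
  intro hk
  have hcap : ∀ᶠ t in 𝓝 (0 : ℝ), a ⬝ᵥ (z + t • Pi.single k 1) < b := by
    have hcont : Continuous fun t : ℝ => a ⬝ᵥ (z + t • Pi.single k 1) :=
      continuous_const.dotProduct (continuous_const.add (continuous_id.smul continuous_const))
    exact hcont.continuousAt.eventually_lt continuousAt_const (by simpa using hslack)
  have hbox := eventually_add_smul_mem_Icc (d := Pi.single k 1) hz.1 fun i hi => by
    by_cases hik : i = k
    · exact hik ▸ hk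
    · simp [hik] at hi
  have := dotProduct_eq_zero_of_isMaxOn hmax ((hbox.and hcap).mono fun t ht => ⟨ht.1, ht.2.le⟩)
  exact hc k (by simpa [dotProduct_single] using this)

lemma eq_of_isMaxOn_of_mem_Ioo [DecidableEq ι] (ha : ∀ i, 0 < a i)
    (hcd : ∀ i j, i ≠ j → c i / a i ≠ c j / a j)
    (hz : z ∈ knapsackFeasible a b) (hmax : IsMaxOn (c ⬝ᵥ ·) (knapsackFeasible a b) z)
    {i j : ι} (hi : z i ∈ Ioo 0 1) (hj : z j ∈ Ioo 0 1) : i = j := by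
  by_contra hij
  set d : ι → ℝ := Pi.single i (a j) - Pi.single j (a i)
  have hda : a ⬝ᵥ d = 0 := by simp [d, dotProduct_sub, dotProduct_single, mul_comm]
  have hbox := eventually_add_smul_mem_Icc (d := d) hz.1 fun k hk => by
    by_cases hki : k = i
    · exact hki ▸ hi
    by_cases hkj : k = j
    · exact hkj ▸ hj
    simp [d, hki, hkj] at hk
  have := dotProduct_eq_zero_of_isMaxOn hmax <| hbox.mono fun t ht =>
    ⟨ht, by simpa [dotProduct_add, dotProduct_smul, hda] using hz.2⟩
  refine hcd i j hij ((div_eq_div_iff (ha i).ne' (ha j).ne').2 ?_)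
  simp only [d, dotProduct_sub, dotProduct_single] at this
  linarith

lemma exists_pos_of_dotProduct_eq_zero {v : ι → ℝ} (ha : ∀ i, 0 < a i) (h : a ⬝ᵥ v = 0)
    (hv : v ≠ 0) : ∃ i, 0 < v i := by
  by_contra! hnonpos
  have hterms := (Finset.sum_eq_zero_iff_of_nonpos fun i _ =>
    mul_nonpos_of_nonneg_of_nonpos (ha i).le (hnonpos i)).1 h
  exact hv (funext fun i => by
    simpa [(ha i).ne'] using hterms i (Finset.mem_univ i))

lemma eq_of_isMaxOn_knapsackFeasible (ha : ∀ i, 0 < a i) (hc : ∀ i, c i ≠ 0)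
    (hcd : ∀ i j, i ≠ j → c i / a i ≠ c j / a j) {x y : ι → ℝ}
    (hx : x ∈ knapsackFeasible a b) (hxmax : IsMaxOn (c ⬝ᵥ ·) (knapsackFeasible a b) x)
    (hy : y ∈ knapsackFeasible a b) (hymax : IsMaxOn (c ⬝ᵥ ·) (knapsackFeasible a b) y) :
    x = y := by
  classical
  by_contra hxy
  set z : ι → ℝ := (1 / 2 : ℝ) • x + (1 / 2 : ℝ) • y
  have hzS : z ∈ knapsackFeasible a b :=
    convex_knapsackFeasible a b hx hy (by norm_num) (by norm_num) (by norm_num)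
  have hval : c ⬝ᵥ x = c ⬝ᵥ y := le_antisymm (hymax hx) (hxmax hy)
  have hzmax : IsMaxOn (c ⬝ᵥ ·) (knapsackFeasible a b) z := fun w hw => by
    simp only [mem_ofPred_eq, z, dotProduct_add, dotProduct_smul, smul_eq_mul, ← hval]
    linarith [isMaxOn_iff.1 hxmax w hw]
  have hz_Ioo : ∀ i, x i ≠ y i → z i ∈ Ioo 0 1 := fun i hi => by
    obtain ⟨hx0, hx1⟩ := hx.1 i
    obtain ⟨hy0, hy1⟩ := hy.1 i
    simp only [z, Pi.add_apply, Pi.smul_apply, smul_eq_mul, mem_Ioo]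
    rcases hi.lt_or_gt with h | h <;> constructor <;> linarith
  obtain ⟨k, hk⟩ : ∃ k, x k ≠ y k := Function.ne_iff.1 hxy
  have hz_tight : a ⬝ᵥ z = b := by
    by_contra hne
    exact notMem_Ioo_of_isMaxOn_of_lt hc hzS hzmax (lt_of_le_of_ne hzS.2 hne) k (hz_Ioo k hk)
  have hdiff : a ⬝ᵥ (x - y) = 0 := by
    simp only [z, dotProduct_add, dotProduct_smul, smul_eq_mul] at hz_tight
    rw [dotProduct_sub]
    linarith [hx.2, hy.2]
  obtain ⟨i, hi⟩ := exists_pos_of_dotProduct_eq_zero ha hdiff (sub_ne_zero.2 hxy)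
  obtain ⟨j, hj⟩ := exists_pos_of_dotProduct_eq_zero ha
    (by rw [← neg_sub, dotProduct_neg, hdiff, neg_zero]) (sub_ne_zero.2 (Ne.symm hxy))
  have hij := eq_of_isMaxOn_of_mem_Ioo ha hcd hzS hzmax
    (hz_Ioo i (sub_pos.1 hi).ne') (hz_Ioo j (sub_pos.1 hj).ne)
  subst hij
  simp only [Pi.sub_apply] at hi hj
  linarith

theorem stmt_1_general (n : ℕ) (a c : Fin n → ℝ) (ha : ∀ i, 0 < a i)
    (hc0 : ∀ i, c i ≠ 0)
    (hcd : ∀ i j : Fin n, i ≠ j → c i / a i ≠ c j / a j)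
    (b : ℝ) (hb : 0 ≤ b) :
    ∃! x : Fin n → ℝ,
      (∀ i, 0 ≤ x i ∧ x i ≤ 1) ∧ ∑ i, a i * x i ≤ b ∧
        ∀ y : Fin n → ℝ, (∀ i, 0 ≤ y i ∧ y i ≤ 1) → ∑ i, a i * y i ≤ b →
          ∑ i, c i * y i ≤ ∑ i, c i * x i := by
  obtain ⟨x, hx, hxmax⟩ := exists_isMaxOn_knapsackFeasible a c hb
  refine ⟨x, ⟨hx.1, hx.2, fun y hy hya => hxmax ⟨hy, hya⟩⟩, ?_⟩
  rintro y ⟨hy, hya, hymax⟩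
  exact eq_of_isMaxOn_knapsackFeasible ha hc0 hcd ⟨hy, hya⟩ (fun w hw => hymax w hw.1 hw.2) hx
    hxmax

/-- If all profit ratios `c i / a i` are pairwise distinct and all item values are
nonzero, then for every capacity `b ∈ [0, Σ aᵢ]` the continuous knapsack problem
has a unique optimal solution. -/
theorem stmt_1 (n : ℕ) (a c : Fin n → ℝ) (ha : ∀ i, 0 < a i)
    (hc0 : ∀ i, c i ≠ 0)
    (hcd : ∀ i j : Fin n, i ≠ j → c i / a i ≠ c j / a j)
    (b : ℝ) (hb : 0 ≤ b) (hbA : b ≤ ∑ i, a i) :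
    ∃! x : Fin n → ℝ,
      (∀ i, 0 ≤ x i ∧ x i ≤ 1) ∧ ∑ i, a i * x i ≤ b ∧
        ∀ y : Fin n → ℝ, (∀ i, 0 ≤ y i ∧ y i ≤ 1) → ∑ i, a i * y i ≤ b →
          ∑ i, c i * y i ≤ ∑ i, c i * x i :=
  stmt_1_general n a c ha hc0 hcd b hb
end

section
/- Let n ∈ ℕ, let a ∈ ℝⁿ with aᵢ > 0, let c ∈ ℝⁿ and n' ∈ {0,…,n} satisfy c₁/a₁ > … > c_{n'}/a_{n'} > 0 and cᵢ < 0 for i > n'. Let d ∈ ℝⁿ, δ ≥ 0, and define x(b) ∈ ℝⁿ by xᵢ(b) = min(1, max(0, (b − Σ_{j=1}^{i−1} aⱼ)/aᵢ)) for i ≤ n' and xᵢ(b) = 0 for i > n', and f(b) := dᵀx(b) − δb. Then for any 0 ≤ b⁻ ≤ b⁺ ≤ Σ_{i=1}^n aᵢ, the maximum of f over [b⁻, b⁺] is attained at a point of the finite set {b⁻, b⁺} ∪ { Σ_{j=1}^{i} aⱼ : i ∈ {1,…,n'}, b⁻ ≤ Σ_{j=1}^{i} aⱼ ≤ b⁺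 }. -/
open scoped Classical

/-!
Every coordinate `xᵢ(b)` is a clamped affine function of `b` whose only kinks are at the
prefix sums `Σ_{j<i} aⱼ` and `Σ_{j≤i} aⱼ`, so `f` is affine between any two consecutive points
of the candidate set. Around an arbitrary `b ∈ [b⁻, b⁺]` pick the nearest candidates `l ≤ b ≤ r`;
affinity gives `f b ≤ max (f l) (f r)`, which is bounded by the best candidate.
-/

def IsAffineOn (g : ℝ → ℝ) (s : Set ℝ) : Prop :=
  ∃ m k : ℝ, ∀ b ∈ s, g b = m * b + k

namespace IsAffineOn

variable {g h : ℝ → ℝ} {s : Set ℝ}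

lemma congr (hg : IsAffineOn g s) (hgh : Set.EqOn g h s) : IsAffineOn h s := by
  obtain ⟨m, k, hmk⟩ := hg
  exact ⟨m, k, fun b hb => (hgh hb).symm.trans (hmk b hb)⟩

lemma const (k : ℝ) : IsAffineOn (fun _ => k) s := ⟨0, k, by simp⟩

lemma id : IsAffineOn (fun b => b) s := ⟨1, 0, by simp⟩

lemma add (hg : IsAffineOn g s) (hh : IsAffineOn h s) :
    IsAffineOn (fun b => g b + h b) s := by
  obtain ⟨m, k, hmk⟩ := hg
  obtain ⟨m', k', hmk'⟩ := hh
  exact ⟨m + m', k + k', fun b hb => by simp only [hmk b hb, hmk' b hb]; ring⟩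

lemma const_mul (c : ℝ) (hg : IsAffineOn g s) : IsAffineOn (fun b => c * g b) s := by
  obtain ⟨m, k, hmk⟩ := hg
  exact ⟨c * m, c * k, fun b hb => by simp only [hmk b hb]; ring⟩

lemma sub (hg : IsAffineOn g s) (hh : IsAffineOn h s) : IsAffineOn (fun b => g b - h b) s :=
  (hg.add (hh.const_mul (-1))).congr fun b _ => by simp only; ring

lemma sum {ι : Type*} (t : Finset ι) {G : ι → ℝ → ℝ} (hG : ∀ i ∈ t, IsAffineOn (G i) s) :
    IsAffineOn (fun b => ∑ i ∈ t, G i b) s := by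
  induction t using Finset.induction_on with
  | empty => simpa using const 0
  | insert i t hi ih =>
    simp only [Finset.sum_insert hi]
    exact (hG i (t.mem_insert_self i)).add (ih fun j hj => hG j (Finset.mem_insert_of_mem hj))

lemma le_max_of_mem_Icc {l r b : ℝ} (hg : IsAffineOn g (Set.Icc l r)) (hb : b ∈ Set.Icc l r) :
    g b ≤ max (g l) (g r) := by
  obtain ⟨m, k, hmk⟩ := hg
  have hlr : l ≤ r := hb.1.trans hb.2
  rw [hmk b hb, hmk l ⟨le_rfl, hlr⟩, hmk r ⟨hlr, le_rfl⟩]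
  rcases le_total 0 m with hm | hm
  · exact le_max_of_le_right (by nlinarith [hb.2])
  · exact le_max_of_le_left (by nlinarith [hb.1])

end IsAffineOn

lemma isAffineOn_clamp {p a l r : ℝ} (ha : 0 < a) (hp : p ≤ l ∨ r ≤ p)
    (hpa : p + a ≤ l ∨ r ≤ p + a) :
    IsAffineOn (fun b => min 1 (max 0 ((b - p) / a))) (Set.Icc l r) := by
  rcases hp with hp | hp
  · rcases hpa with hpa | hpa
    · refine (IsAffineOn.const 1).congr fun b hb => ?_
      have : 1 ≤ (b - p) / a := by rw [le_div_iff₀ ha]; linarith [hb.1]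
      simp only [max_eq_right (zero_le_one.trans this), min_eq_left this]
    · refine ⟨1 / a, -p / a, fun b hb => ?_⟩
      have h0 : 0 ≤ (b - p) / a := div_nonneg (by linarith [hb.1]) ha.le
      have h1 : (b - p) / a ≤ 1 := by rw [div_le_one ha]; linarith [hb.2]
      simp only [max_eq_right h0, min_eq_right h1]
      ring
  · refine (IsAffineOn.const 0).congr fun b hb => ?_
    have : (b - p) / a ≤ 0 := div_nonpos_of_nonpos_of_nonneg (by linarith [hb.2]) ha.le
    simp only [max_eq_left this, min_eq_right zero_le_one]

lemma Finset.exists_bracket {α : Type*} [LinearOrder α] (T : Finset α) {l₀ r₀ b : α}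
    (hl₀ : l₀ ∈ T) (hr₀ : r₀ ∈ T) (hl₀b : l₀ ≤ b) (hbr₀ : b ≤ r₀) :
    ∃ l ∈ T, ∃ r ∈ T, l ≤ b ∧ b ≤ r ∧ ∀ s ∈ T, s ≤ l ∨ r ≤ s := by
  have hL : (T.filter (· ≤ b)).Nonempty := ⟨l₀, mem_filter.2 ⟨hl₀, hl₀b⟩⟩
  have hR : (T.filter (b ≤ ·)).Nonempty := ⟨r₀, mem_filter.2 ⟨hr₀, hbr₀⟩⟩
  obtain ⟨hlT, hlb⟩ := mem_filter.1 ((T.filter (· ≤ b)).max'_mem hL)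
  obtain ⟨hrT, hbr⟩ := mem_filter.1 ((T.filter (b ≤ ·)).min'_mem hR)
  refine ⟨_, hlT, _, hrT, hlb, hbr, fun s hs => ?_⟩
  rcases le_total s b with hsb | hbs
  · exact Or.inl (le_max' _ s (mem_filter.2 ⟨hs, hsb⟩))
  · exact Or.inr (min'_le _ s (mem_filter.2 ⟨hs, hbs⟩))

lemma exists_mem_forall_le_of_isAffineOn_gaps {f : ℝ → ℝ} {T : Finset ℝ} {bm bp : ℝ}
    (hbm : bm ∈ T) (hbp : bp ∈ T)
    (hgap : ∀ l ∈ T, ∀ r ∈ T, (∀ s ∈ T, s ≤ l ∨ r ≤ s) → IsAffineOn f (Set.Icc l r)) :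
    ∃ t ∈ T, ∀ b ∈ Set.Icc bm bp, f b ≤ f t := by
  obtain ⟨t, htT, ht_max⟩ := T.exists_max_image f ⟨bm, hbm⟩
  refine ⟨t, htT, fun b hb => ?_⟩
  obtain ⟨l, hlT, r, hrT, hlb, hbr, hlr⟩ := T.exists_bracket hbm hbp hb.1 hb.2
  calc f b ≤ max (f l) (f r) := (hgap l hlT r hrT hlr).le_max_of_mem_Icc ⟨hlb, hbr⟩
    _ ≤ f t := max_le (ht_max l hlT) (ht_max r hrT)

section PrefixSums

variable {M : Type*} [AddCommMonoid M] {n : ℕ} (a : Fin n → M)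

lemma sum_filter_lt_add_eq_sum_filter_le (i : Fin n) :
    ∑ j ∈ Finset.univ.filter (fun j : Fin n => (j : ℕ) < (i : ℕ)), a j + a i =
      ∑ j ∈ Finset.univ.filter (fun j : Fin n => (j : ℕ) ≤ (i : ℕ)), a j := by
  simp only [Fin.val_fin_lt, Fin.val_fin_le, Finset.filter_gt_eq_Iio, Finset.filter_ge_eq_Iic,
    ← Finset.Iio_insert, Finset.sum_insert Finset.notMem_Iio_self, add_comm]

lemma sum_filter_lt_eq_zero_or_eq_sum_filter_le (i : Fin n) :
    ∑ j ∈ Finset.univ.filter (fun j : Fin n => (j : ℕ) < (i : ℕ)), a j = 0 ∨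
      ∃ k : Fin n, (k : ℕ) < i ∧
        ∑ j ∈ Finset.univ.filter (fun j : Fin n => (j : ℕ) < (i : ℕ)), a j =
          ∑ j ∈ Finset.univ.filter (fun j : Fin n => (j : ℕ) ≤ (k : ℕ)), a j := by
  obtain ⟨_ | k, hi⟩ := i
  · simp
  · refine Or.inr ⟨⟨k, by omega⟩, by simp, ?_⟩
    simp only [Nat.lt_succ_iff]

end PrefixSums

lemma isAffineOn_clamp_prefix_sum {n : ℕ} (a : Fin n → ℝ) (i : Fin n) (hai : 0 < a i)
    {l r : ℝ} (hl : 0 ≤ l)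
    (hkink : ∀ k : Fin n, (k : ℕ) ≤ i →
      ∑ j ∈ Finset.univ.filter (fun j : Fin n => (j : ℕ) ≤ (k : ℕ)), a j ≤ l ∨
        r ≤ ∑ j ∈ Finset.univ.filter (fun j : Fin n => (j : ℕ) ≤ (k : ℕ)), a j) :
    IsAffineOn (fun b => min 1 (max 0
      ((b - ∑ j ∈ Finset.univ.filter (fun j : Fin n => (j : ℕ) < (i : ℕ)), a j) / a i)))
      (Set.Icc l r) := by
  refine isAffineOn_clamp hai ?_ ?_
  · rcases sum_filter_lt_eq_zero_or_eq_sum_filter_le a i with h0 | ⟨k, hk, hQk⟩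
    · exact Or.inl (h0 ▸ hl)
    · exact hQk ▸ hkink k hk.le
  · exact (sum_filter_lt_add_eq_sum_filter_le a i).symm ▸ hkink i le_rfl

theorem stmt_2_general (n : ℕ) (a d : Fin n → ℝ) (ha : ∀ i, 0 < a i)
    (n' : ℕ)
    (δ : ℝ)
    (bm bp : ℝ) (hbm : 0 ≤ bm) (hbmp : bm ≤ bp)
    (x : ℝ → Fin n → ℝ)
    (hx : ∀ (b : ℝ) (i : Fin n), x b i =
      if (i : ℕ) < n' then
        min 1 (max 0
          ((b - ∑ j ∈ Finset.univ.filter (fun j : Fin n => (j : ℕ) < (i : ℕ)), a j) / a i))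
      else 0)
    (f : ℝ → ℝ) (hf : ∀ b : ℝ, f b = (∑ i, d i * x b i) - δ * b) :
    ∃ bstar ∈ Set.Icc bm bp,
      (bstar = bm ∨ bstar = bp ∨
        ∃ i : Fin n, (i : ℕ) < n' ∧
          bstar = ∑ j ∈ Finset.univ.filter (fun j : Fin n => (j : ℕ) ≤ (i : ℕ)), a j) ∧
      ∀ b ∈ Set.Icc bm bp, f b ≤ f bstar := by
  set S : Fin n → ℝ := fun i =>
    ∑ j ∈ Finset.univ.filter (fun j : Fin n => (j : ℕ) ≤ (i : ℕ)), a j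
  set T : Finset ℝ := insert bm (insert bp
    (((Finset.univ.filter fun i : Fin n => (i : ℕ) < n').image S).filter (· ∈ Set.Icc bm bp)))
  have hbmT : bm ∈ T := by simp [T]
  have hbpT : bp ∈ T := by simp [T]
  have hT : ∀ t ∈ T, t ∈ Set.Icc bm bp ∧
      (t = bm ∨ t = bp ∨ ∃ i : Fin n, (i : ℕ) < n' ∧ t = S i) := by
    intro t ht
    simp only [T, Finset.mem_insert, Finset.mem_filter, Finset.mem_image, Finset.mem_univ,
      true_and] at ht
    rcases ht with rfl | rfl | ⟨⟨i, hi, rfl⟩, hmem⟩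
    · exact ⟨⟨le_rfl, hbmp⟩, Or.inl rfl⟩
    · exact ⟨⟨hbmp, le_rfl⟩, Or.inr (Or.inl rfl)⟩
    · exact ⟨hmem, Or.inr (Or.inr ⟨i, hi, rfl⟩)⟩
  have hgap : ∀ l ∈ T, ∀ r ∈ T, (∀ s ∈ T, s ≤ l ∨ r ≤ s) → IsAffineOn f (Set.Icc l r) := by
    intro l hlT r hrT hlr
    have hkink : ∀ i : Fin n, (i : ℕ) < n' → S i ≤ l ∨ r ≤ S i := by
      intro i hi
      by_cases hlo : S i < bm
      · exact Or.inl (hlo.le.trans (hT l hlT).1.1)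
      by_cases hhi : bp < S i
      · exact Or.inr ((hT r hrT).1.2.trans hhi.le)
      exact hlr _ (by simpa [T, not_lt.1 hlo, not_lt.1 hhi] using Or.inr (Or.inr ⟨i, hi, rfl⟩))
    have hx_affine : ∀ i, IsAffineOn (fun b => x b i) (Set.Icc l r) := by
      intro i
      refine IsAffineOn.congr ?_ fun b _ => (hx b i).symm
      split_ifs with hi
      · exact isAffineOn_clamp_prefix_sum a i (ha i) (hbm.trans (hT l hlT).1.1)
          fun k hk => hkink k (hk.trans_lt hi)
      · exact IsAffineOn.const 0
    exact ((IsAffineOn.sum _ fun i _ => (hx_affine i).const_mul (d i)).sub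
      (IsAffineOn.id.const_mul δ)).congr fun b _ => (hf b).symm
  obtain ⟨t, htT, ht⟩ := exists_mem_forall_le_of_isAffineOn_gaps hbmT hbpT hgap
  exact ⟨t, (hT t htT).1, (hT t htT).2, ht⟩

/-- The leader's objective `f(b) = dᵀx(b) − δb` of the deterministic bilevel
continuous knapsack problem attains its maximum over `[b⁻, b⁺]` at one of the
boundary points or at a feasible prefix sum `Σ_{j ≤ i} aⱼ` with `i < n'`. -/
theorem stmt_2 (n : ℕ) (a c d : Fin n → ℝ) (ha : ∀ i, 0 < a i)
    (n' : ℕ) (hn' : n' ≤ n)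
    (hsort : ∀ i j : Fin n, (i : ℕ) < (j : ℕ) → (j : ℕ) < n' → c j / a j < c i / a i)
    (hpos : ∀ i : Fin n, (i : ℕ) < n' → 0 < c i / a i)
    (hneg : ∀ i : Fin n, n' ≤ (i : ℕ) → c i < 0)
    (δ : ℝ) (hδ : 0 ≤ δ)
    (bm bp : ℝ) (hbm : 0 ≤ bm) (hbmp : bm ≤ bp) (hbp : bp ≤ ∑ i, a i)
    (x : ℝ → Fin n → ℝ)
    (hx : ∀ (b : ℝ) (i : Fin n), x b i =
      if (i : ℕ) < n' then
        min 1 (max 0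
          ((b - ∑ j ∈ Finset.univ.filter (fun j : Fin n => (j : ℕ) < (i : ℕ)), a j) / a i))
      else 0)
    (f : ℝ → ℝ) (hf : ∀ b : ℝ, f b = (∑ i, d i * x b i) - δ * b) :
    ∃ bstar ∈ Set.Icc bm bp,
      (bstar = bm ∨ bstar = bp ∨
        ∃ i : Fin n, (i : ℕ) < n' ∧
          bstar = ∑ j ∈ Finset.univ.filter (fun j : Fin n => (j : ℕ) ≤ (i : ℕ)), a j) ∧
      ∀ b ∈ Set.Icc bm bp, f b ≤ f bstar :=
  stmt_2_general n a d ha n' δ bm bp hbm hbmp x hx f hf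
end

section
/- Let m ∈ ℕ, let a₁,…,aₘ be positive integers with A = Σ_{i=1}^m aᵢ, and let τ ∈ ℝ. For M ⊆ {1,…,m}, set s_M = Σ_{i∈M} aᵢ and define f_{M,τ} : ℝ → ℝ by f_{M,τ}(b) = (1+τ)·min(b, s_M) + (−1+τ)·max(b − s_M, 0). Define f̂_τ := (1/2)·f_{{1,…,m},τ} + 2^{−(m+1)} Σ_{M ⊆ {1,…,m}} f_{M,τ}. Then for every integer b with 1 ≤ b ≤ A, f̂_τ(b) − f̂_τ(b−1) = 1 + τ − 2^{−m} · #{x ∈ {0,1}^m : Σ_{i=1}^m aᵢxᵢ ≤ b − 1}. -/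
/-!
Between consecutive integers `b - 1` and `b` no breakpoint `s_M` lies strictly inside, so each
`f_{M,τ}` increases there by `1 + τ` or by `τ - 1`, the latter exactly when `s_M ≤ b - 1`.
Since `b ≤ A`, the full set contributes `1 + τ`; summing the rest counts the subsets of weight at
most `b - 1`.
-/

open scoped Classical

/-- `f_{M,τ}` of the paper is `hinge τ s_M`. -/
noncomputable def hinge (τ s b : ℝ) : ℝ :=
  (1 + τ) * min b s + (-1 + τ) * max (b - s) 0

section hinge

variable {τ s b : ℝ}

lemma hinge_sub_of_le (h : b ≤ s) : hinge τ s b - hinge τ s (b - 1) = 1 + τ := by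
  simp only [hinge]
  rw [min_eq_left h, min_eq_left (by linarith), max_eq_right (by linarith),
    max_eq_right (by linarith)]
  ring

lemma hinge_sub_of_le_sub_one (h : s ≤ b - 1) : hinge τ s b - hinge τ s (b - 1) = -1 + τ := by
  simp only [hinge]
  rw [min_eq_right (by linarith), min_eq_right h, max_eq_left (by linarith),
    max_eq_left (by linarith)]
  ring

end hinge

lemma hinge_natCast_sub_one (τ : ℝ) (s b : ℕ) (hb : 1 ≤ b) :
    hinge τ s b - hinge τ s ((b : ℝ) - 1) = 1 + τ - if s ≤ b - 1 then 2 else 0 := by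
  split_ifs with h
  · rw [hinge_sub_of_le_sub_one (by rw [← Nat.cast_pred hb]; exact_mod_cast h)]
    ring
  · rw [hinge_sub_of_le (by exact_mod_cast (by omega : b ≤ s))]
    ring

theorem stmt_4_general (m : ℕ) (a : Fin m → ℕ) (τ : ℝ)
    (A : ℕ) (hA : A = ∑ i, a i)
    (f : Finset (Fin m) → ℝ → ℝ)
    (hf : ∀ (M : Finset (Fin m)) (b : ℝ),
      f M b = (1 + τ) * min b (∑ i ∈ M, (a i : ℝ)) +
        (-1 + τ) * max (b - ∑ i ∈ M, (a i : ℝ)) 0)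
    (fhat : ℝ → ℝ)
    (hfhat : ∀ b : ℝ, fhat b =
      (1 / 2) * f Finset.univ b +
        (2 : ℝ) ^ (-((m : ℤ) + 1)) * ∑ M : Finset (Fin m), f M b) :
    ∀ b : ℕ, 1 ≤ b → b ≤ A →
      fhat b - fhat ((b : ℝ) - 1) =
        1 + τ - (2 : ℝ) ^ (-(m : ℤ)) *
          ((Finset.univ.filter
            (fun M : Finset (Fin m) => ∑ i ∈ M, a i ≤ b - 1)).card : ℝ) := by
  intro b hb hbA
  set N := ((Finset.univ.filter
    (fun M : Finset (Fin m) => ∑ i ∈ M, a i ≤ b - 1)).card : ℝ)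
  have hstep (M : Finset (Fin m)) : f M b - f M ((b : ℝ) - 1) =
      1 + τ - if ∑ i ∈ M, a i ≤ b - 1 then 2 else 0 := by
    simp only [hf, ← Nat.cast_sum]
    exact hinge_natCast_sub_one τ _ b hb
  have hstep_univ : f Finset.univ b - f Finset.univ ((b : ℝ) - 1) = 1 + τ := by
    rw [hstep, if_neg (by omega)]
    ring
  have hsum : ∑ M, f M b - ∑ M, f M ((b : ℝ) - 1) = 2 ^ m * (1 + τ) - 2 * N := by
    rw [← Finset.sum_sub_distrib, Finset.sum_congr rfl fun M _ => hstep M,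
      Finset.sum_sub_distrib, ← Finset.sum_filter]
    simp only [Finset.sum_const, Finset.card_univ, Fintype.card_finset, Fintype.card_fin,
      nsmul_eq_mul, Nat.cast_pow, Nat.cast_ofNat, N]
    ring
  calc fhat b - fhat ((b : ℝ) - 1)
      = 1 / 2 * (f Finset.univ b - f Finset.univ ((b : ℝ) - 1)) +
          (2 : ℝ) ^ (-((m : ℤ) + 1)) * (∑ M, f M b - ∑ M, f M ((b : ℝ) - 1)) := by
        rw [hfhat, hfhat]; ring
    _ = 1 + τ - (2 : ℝ) ^ (-(m : ℤ)) * N := by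
        rw [hstep_univ, hsum, zpow_neg, zpow_neg, zpow_add_one₀ two_ne_zero, zpow_natCast]
        field_simp
        ring

/-- The slope formula for the expected leader's objective in the #P-hardness
reduction from #Knapsack: for every integer capacity `1 ≤ b ≤ A`,
`f̂_τ(b) − f̂_τ(b−1) = 1 + τ − 2^{−m} · #{x ∈ {0,1}^m : Σ aᵢxᵢ ≤ b − 1}`. -/
theorem stmt_4 (m : ℕ) (a : Fin m → ℕ) (ha : ∀ i, 0 < a i) (τ : ℝ)
    (A : ℕ) (hA : A = ∑ i, a i)
    (f : Finset (Fin m) → ℝ → ℝ)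
    (hf : ∀ (M : Finset (Fin m)) (b : ℝ),
      f M b = (1 + τ) * min b (∑ i ∈ M, (a i : ℝ)) +
        (-1 + τ) * max (b - ∑ i ∈ M, (a i : ℝ)) 0)
    (fhat : ℝ → ℝ)
    (hfhat : ∀ b : ℝ, fhat b =
      (1 / 2) * f Finset.univ b +
        (2 : ℝ) ^ (-((m : ℤ) + 1)) * ∑ M : Finset (Fin m), f M b) :
    ∀ b : ℕ, 1 ≤ b → b ≤ A →
      fhat b - fhat ((b : ℝ) - 1) =
        1 + τ - (2 : ℝ) ^ (-(m : ℤ)) *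
          ((Finset.univ.filter
            (fun M : Finset (Fin m) => ∑ i ∈ M, a i ≤ b - 1)).card : ℝ) :=
  stmt_4_general m a τ A hA f hf fhat hfhat
end

section
/- Let m ≥ 2 and let a₁,…,aₘ be positive integers; set a_{m+1} := Σ_{i=1}^m aᵢ and ε := 1/(2a_{m+1}). Let c₁,…,c_{m+1} be independent random variables, each uniformly distributed on the two-element set {ε, 1}. Define the random set I := {i ∈ {1,…,m} : cᵢ/aᵢ > c_{m+1}/a_{m+1}}. Then ℙ(I = {1,…,m}) = 1/2 + 2^{−(m+1)}, and ℙ(I = M) = 2^{−(m+1)} for every proper subset M ⊊ {1,…,m}. -/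
open scoped Classical ENNReal
open MeasureTheory ProbabilityTheory

/-! Almost surely every value is `ε` or `1`. Since `ε A = 1/2 ≤ aᵢ < A`, item `m + 1` is beaten by
every item when `c_{m+1} = ε`, whereas when `c_{m+1} = 1` item `i` beats it exactly when `cᵢ = 1`.
Hence `I = M` for a proper subset `M` pins down the whole value vector, an event of probability
`2^{-(m+1)}` by independence, and `I = {1,…,m}` is the disjoint union of `{c_{m+1} = ε}` and the
event that all values are `1`. -/

theorem ProbabilityTheory.iIndepFun.measure_setOf_forall_eq {Ω ι β : Type*} [MeasurableSpace Ω]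
    {μ : Measure Ω} [Fintype ι] [MeasurableSpace β] [MeasurableSingletonClass β]
    {f : ι → Ω → β} (hf : iIndepFun f μ) (v : ι → β) :
    μ {ω | ∀ i, f i ω = v i} = ∏ i, μ {ω | f i ω = v i} := by
  have h := hf.measure_inter_preimage_eq_mul Finset.univ (sets := fun i => {v i})
    fun i _ => measurableSet_singleton _
  simp only [Finset.mem_univ, Set.iInter_true] at h
  rw [Set.ofPred_forall]
  exact h

theorem Nat.lt_sum_of_pos {ι : Type*} [Fintype ι] [Nontrivial ι] {f : ι → ℕ}
    (hf : ∀ i, 0 < f i) (i : ι) : f i < ∑ j, f j := by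
  obtain ⟨j, hji⟩ := exists_ne i
  exact Finset.single_lt_sum hji (Finset.mem_univ i) (Finset.mem_univ j) (hf j)
    fun k _ _ => Nat.zero_le _

theorem ae_eq_or_eq_of_measure_add_eq_one {Ω β : Type*} [MeasurableSpace Ω] {μ : Measure Ω}
    [IsProbabilityMeasure μ] [MeasurableSpace β] [MeasurableSingletonClass β] {f : Ω → β}
    (hf : Measurable f) {x y : β} (hxy : x ≠ y)
    (h : μ {ω | f ω = x} + μ {ω | f ω = y} = 1) :
    ∀ᵐ ω ∂μ, f ω = x ∨ f ω = y := by
  have hx := hf (measurableSet_singleton x)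
  have hy := hf (measurableSet_singleton y)
  have hdisj : Disjoint {ω | f ω = x} {ω | f ω = y} :=
    Set.disjoint_left.2 fun _ hωx hωy => hxy (hωx.symm.trans hωy)
  rw [← measure_union hdisj hy] at h
  exact mem_ae_iff.2 ((prob_compl_eq_zero_iff (hx.union hy)).2 h)

section Preference

variable {m : ℕ}

noncomputable def preferredItems (a : Fin m → ℝ) (A : ℝ) (v : Fin (m + 1) → ℝ) : Finset (Fin m) :=
  Finset.univ.filter fun i => v (Fin.last m) / A < v (Fin.castSucc i) / a i

def valuesOneOn (ε : ℝ) (M : Finset (Fin m)) : Fin (m + 1) → ℝ :=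
  Fin.snoc (α := fun _ => ℝ) (fun i => if i ∈ M then 1 else ε) 1

theorem valuesOneOn_eq_or {ε : ℝ} (M : Finset (Fin m)) (j : Fin (m + 1)) :
    valuesOneOn ε M j = ε ∨ valuesOneOn ε M j = 1 := by
  induction j using Fin.lastCases with
  | last => simp [valuesOneOn]
  | cast i => by_cases hi : i ∈ M <;> simp [valuesOneOn, hi]

variable {a : Fin m → ℝ} {A ε : ℝ} {v : Fin (m + 1) → ℝ}

theorem preferredItems_eq_univ (ha : ∀ i, 0 < a i) (haA : ∀ i, a i < A) (hε : 0 < ε)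
    (hε1 : ε < 1) (hv : ∀ j, v j = ε ∨ v j = 1) (hlast : v (Fin.last m) = ε) :
    preferredItems a A v = Finset.univ := by
  refine Finset.eq_univ_iff_forall.2 fun i => Finset.mem_filter.2 ⟨Finset.mem_univ i, ?_⟩
  have hA : 0 < A := (ha i).trans (haA i)
  rw [hlast, div_lt_div_iff₀ hA (ha i)]
  rcases hv i.castSucc with h | h <;> rw [h] <;> nlinarith [ha i, haA i]

theorem preferredItems_eq_filter (ha : ∀ i, 0 < a i) (haA : ∀ i, a i < A) (hε1 : ε < 1)
    (hεA : ∀ i, ε * A ≤ a i) (hv : ∀ j, v j = ε ∨ v j = 1) (hlast : v (Fin.last m) = 1) :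
    preferredItems a A v = Finset.univ.filter fun i => v (Fin.castSucc i) = 1 := by
  refine Finset.filter_congr fun i _ => ?_
  have hA : 0 < A := (ha i).trans (haA i)
  rw [hlast, div_lt_div_iff₀ hA (ha i)]
  rcases hv i.castSucc with h | h <;> rw [h]
  · exact iff_of_false (by linarith [hεA i]) hε1.ne
  · exact iff_of_true (by linarith [haA i]) rfl

theorem preferredItems_eq_iff (ha : ∀ i, 0 < a i) (haA : ∀ i, a i < A) (hε : 0 < ε)
    (hε1 : ε < 1) (hεA : ∀ i, ε * A ≤ a i) (hv : ∀ j, v j = ε ∨ v j = 1)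
    {M : Finset (Fin m)} :
    preferredItems a A v = M ↔
      (M = Finset.univ ∧ v (Fin.last m) = ε) ∨ ∀ j, v j = valuesOneOn ε M j := by
  rcases hv (Fin.last m) with hlast | hlast
  · have hne : ¬ ∀ j, v j = valuesOneOn ε M j := fun h =>
      hε1.ne (by simpa [valuesOneOn, hlast] using h (Fin.last m))
    rw [preferredItems_eq_univ ha haA hε hε1 hv hlast]
    simp [hne, hlast, eq_comm]
  · rw [preferredItems_eq_filter ha haA hε1 hεA hv hlast, Fin.forall_fin_succ']
    simp only [valuesOneOn, Fin.snoc_castSucc, Fin.snoc_last, hlast, hε1.ne', and_false,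
      false_or, and_true, Finset.ext_iff, Finset.mem_filter, Finset.mem_univ, true_and]
    refine forall_congr' fun i => ?_
    by_cases hi : i ∈ M <;> rcases hv i.castSucc with h | h <;> simp [hi, h, hε1.ne, hε1.ne']

end Preference

theorem measure_setOf_forall_eq_valuesOneOn {Ω : Type*} [MeasurableSpace Ω] {μ : Measure Ω}
    {m : ℕ} {ε : ℝ} {c : Fin (m + 1) → Ω → ℝ} (hind : iIndepFun c μ)
    (hdist : ∀ i, μ {ω | c i ω = ε} = 1 / 2 ∧ μ {ω | c i ω = 1} = 1 / 2) (M : Finset (Fin m)) :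
    μ {ω | ∀ j, c j ω = valuesOneOn ε M j} = 2 ^ (-((m : ℤ) + 1)) := by
  have hhalf : ∀ j, μ {ω | c j ω = valuesOneOn ε M j} = 2⁻¹ := fun j => by
    rcases valuesOneOn_eq_or M j with h | h <;> rw [h, ← one_div]
    exacts [(hdist j).1, (hdist j).2]
  rw [hind.measure_setOf_forall_eq, Finset.prod_congr rfl fun j _ => hhalf j,
    Finset.prod_const, Finset.card_univ, Fintype.card_fin, ← ENNReal.inv_pow,
    show -((m : ℤ) + 1) = -((m + 1 : ℕ) : ℤ) by push_cast; ring, ENNReal.zpow_neg, zpow_natCast]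

theorem measure_last_eq_or_forall_eq_one {Ω : Type*} [MeasurableSpace Ω] {μ : Measure Ω}
    {m : ℕ} {ε : ℝ} (hε1 : ε ≠ 1) {c : Fin (m + 1) → Ω → ℝ} (hmeas : ∀ i, Measurable (c i))
    (hind : iIndepFun c μ)
    (hdist : ∀ i, μ {ω | c i ω = ε} = 1 / 2 ∧ μ {ω | c i ω = 1} = 1 / 2) :
    μ {ω | c (Fin.last m) ω = ε ∨ ∀ j, c j ω = valuesOneOn ε Finset.univ j} =
      1 / 2 + 2 ^ (-((m : ℤ) + 1)) := by
  have hdisj : Disjoint {ω | c (Fin.last m) ω = ε}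
      {ω | ∀ j, c j ω = valuesOneOn ε Finset.univ j} :=
    Set.disjoint_left.2 fun ω hlast hone =>
      hε1 (hlast.symm.trans (by simpa [valuesOneOn] using hone (Fin.last m)))
  have hmeasS : MeasurableSet {ω | ∀ j, c j ω = valuesOneOn ε Finset.univ j} := by
    rw [Set.ofPred_forall]
    exact MeasurableSet.iInter fun j => hmeas j (measurableSet_singleton _)
  rw [Set.ofPred_or, measure_union hdisj hmeasS, (hdist _).1,
    measure_setOf_forall_eq_valuesOneOn hind hdist]

/-- In the #P-hardness reduction with item values independently uniformly
distributed on the two-element set `{ε, 1}` with `ε = 1/(2a_{m+1})`, the random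
set `I = {i ≤ m : cᵢ/aᵢ > c_{m+1}/a_{m+1}}` equals `{1,…,m}` with probability
`1/2 + 2^{−(m+1)}` and equals each proper subset with probability `2^{−(m+1)}`. -/
theorem stmt_5 {Ω : Type*} [MeasurableSpace Ω] (μ : Measure Ω) [IsProbabilityMeasure μ]
    (m : ℕ) (hm : 2 ≤ m) (a : Fin m → ℕ) (ha : ∀ i, 0 < a i)
    (A : ℕ) (hA : A = ∑ i, a i) (ε : ℝ) (hε : ε = 1 / (2 * (A : ℝ)))
    (c : Fin (m + 1) → Ω → ℝ) (hmeas : ∀ i, Measurable (c i))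
    (hind : iIndepFun c μ)
    (hdist : ∀ i, μ {ω | c i ω = ε} = 1 / 2 ∧ μ {ω | c i ω = 1} = 1 / 2) :
    μ {ω | Finset.univ.filter
        (fun i : Fin m =>
          c (Fin.last m) ω / (A : ℝ) < c (Fin.castSucc i) ω / (a i : ℝ)) = Finset.univ}
      = 1 / 2 + 2 ^ (-((m : ℤ) + 1)) ∧
    ∀ M : Finset (Fin m), M ≠ Finset.univ →
      μ {ω | Finset.univ.filter
          (fun i : Fin m =>
            c (Fin.last m) ω / (A : ℝ) < c (Fin.castSucc i) ω / (a i : ℝ)) = M}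
        = 2 ^ (-((m : ℤ) + 1)) := by
  have : Nontrivial (Fin m) := Fin.nontrivial_iff_two_le.2 hm
  have ha1 : ∀ i, (1 : ℝ) ≤ a i := fun i => Nat.one_le_cast.2 (ha i)
  have haA : ∀ i, (a i : ℝ) < A := fun i => by exact_mod_cast hA ▸ Nat.lt_sum_of_pos ha i
  have hA1 : (1 : ℝ) ≤ A := (ha1 ⟨0, by omega⟩).trans (haA _).le
  have hεA : ε * A = 1 / 2 := by rw [hε]; field_simp
  have hεpos : 0 < ε := by rw [hε]; positivity
  have hε1 : ε < 1 := by nlinarith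
  have hvals : ∀ᵐ ω ∂μ, ∀ j, c j ω = ε ∨ c j ω = 1 := ae_all_iff.2 fun j =>
    ae_eq_or_eq_of_measure_add_eq_one (hmeas j) hε1.ne
      (by rw [(hdist j).1, (hdist j).2, ENNReal.add_halves])
  have hevent : ∀ M : Finset (Fin m),
      {ω | preferredItems (fun i => (a i : ℝ)) A (fun j => c j ω) = M} =ᵐ[μ]
        {ω | (M = Finset.univ ∧ c (Fin.last m) ω = ε) ∨ ∀ j, c j ω = valuesOneOn ε M j} :=
    fun M => Filter.eventuallyEq_set.2 <| hvals.mono fun ω hω =>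
      preferredItems_eq_iff (fun i => by linarith [ha1 i]) haA hεpos hε1
        (fun i => by linarith [ha1 i]) hω
  refine ⟨(measure_congr (hevent _)).trans ?_, fun M hM => (measure_congr (hevent M)).trans ?_⟩
  · simpa using measure_last_eq_or_forall_eq_one hε1.ne hmeas hind hdist
  · simpa [hM] using measure_setOf_forall_eq_valuesOneOn hind hdist M
end

section
/- Let c₁,…,cₙ be real-valued random variables with ℙ(cᵢ = 0) = 0 and ℙ(cᵢ/aᵢ = cⱼ/aⱼ) = 0 for all i ≠ j, and let a₁,…,aₙ be positive integers with A = Σ_{j=1}^n aⱼ. For i ∈ {1,…,n} define the random variables S_i := Σ_{j ≠ i : c_j/a_j > c_i/a_i} a_j and, for b ∈ {0,…,A}, x_i(b) := min(1, max(0, (b − S_i)/a_i)) if c_i > 0 and x_i(b) := 0 if c_i < 0. Then for every i and every integer b with 1 ≤ b ≤ A, 𝔼[x_i(b)] − 𝔼[x_i(b−1)] = (1/a_i) Σ_{r=1}^{a_i} ℙ( c_i > 0 and S_i = b − r ). -/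
/-!
Pointwise, the ramp `t ↦ min 1 (max 0 ((t - Sᵢ) / aᵢ))` climbs from `0` to `1` on `[Sᵢ, Sᵢ + aᵢ]`,
so over the integer step `[b - 1, b]` it gains `1 / aᵢ` exactly when `Sᵢ = b - r` for one
(necessarily unique) `r ∈ [1, aᵢ]`, and nothing otherwise. Integrating this identity of random
variables gives the claim.
-/

open scoped Classical
open MeasureTheory

lemma sum_Icc_ite_add_eq (s b a : ℕ) :
    (∑ r ∈ Finset.Icc 1 a, if s + r = b then (1 : ℝ) else 0) =
      if s < b ∧ b ≤ s + a then 1 else 0 := by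
  split_ifs with h
  · rw [Finset.sum_eq_single_of_mem (b - s) (by simp only [Finset.mem_Icc]; omega)
      (fun r _ hr => if_neg (by omega)), if_pos (by omega)]
  · exact Finset.sum_eq_zero fun r hr => if_neg (by simp only [Finset.mem_Icc] at hr; omega)

lemma ramp_sub_ramp_sub_one (s b : ℕ) {a : ℕ} (ha : 0 < a) :
    min 1 (max 0 (((b : ℝ) - s) / a)) - min 1 (max 0 (((b : ℝ) - 1 - s) / a)) =
      1 / a * ∑ r ∈ Finset.Icc 1 a, if s + r = b then (1 : ℝ) else 0 := by
  have ha' : (0 : ℝ) < a := by exact_mod_cast ha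
  rw [sum_Icc_ite_add_eq]
  split_ifs with h
  · have hsb : (s : ℝ) + 1 ≤ b := by exact_mod_cast h.1
    have hbs : (b : ℝ) ≤ s + a := by exact_mod_cast h.2
    rw [max_eq_right (div_nonneg (by linarith) ha'.le),
      max_eq_right (div_nonneg (by linarith) ha'.le),
      min_eq_right ((div_le_one ha').2 (by linarith)), min_eq_right ((div_le_one ha').2 (by linarith))]
    field_simp
    ring
  · rcases le_or_gt b s with hbs | hsb
    · have hbs : (b : ℝ) ≤ s := by exact_mod_cast hbs
      rw [max_eq_left (div_nonpos_of_nonpos_of_nonneg (by linarith) ha'.le),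
        max_eq_left (div_nonpos_of_nonpos_of_nonneg (by linarith) ha'.le)]
      simp
    · have hbs : (s : ℝ) + a + 1 ≤ b := by exact_mod_cast (show s + a + 1 ≤ b by omega)
      have h₁ : 1 ≤ ((b : ℝ) - s) / a := (le_div_iff₀ ha').2 (by linarith)
      have h₂ : 1 ≤ ((b : ℝ) - 1 - s) / a := (le_div_iff₀ ha').2 (by linarith)
      rw [min_eq_left (le_max_of_le_right h₁), min_eq_left (le_max_of_le_right h₂)]
      simp

lemma abs_min_one_max_zero_le_one (z : ℝ) : |min 1 (max 0 z)| ≤ 1 :=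
  abs_le.2 ⟨by linarith [le_min zero_le_one (le_max_left 0 z)], min_le_left _ _⟩

lemma measurable_sum_filter_lt {Ω ι : Type*} [MeasurableSpace Ω] [Fintype ι] [DecidableEq ι]
    {f : ι → Ω → ℝ} (hf : ∀ j, Measurable (f j)) (i : ι) (w : ι → ℕ) :
    Measurable fun ω => ∑ j ∈ Finset.univ.filter (fun j => j ≠ i ∧ f i ω < f j ω), w j := by
  simp_rw [Finset.sum_filter]
  exact Finset.measurable_sum _ fun j _ => Measurable.ite
    ((MeasurableSet.const _).inter (measurableSet_lt (hf i) (hf j))) measurable_const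
    measurable_const

theorem stmt_8_general {Ω : Type*} [MeasurableSpace Ω] (μ : Measure Ω) [IsProbabilityMeasure μ]
    (n : ℕ) (c : Fin n → Ω → ℝ) (hmeas : ∀ k, Measurable (c k))
    (a : Fin n → ℕ) (ha : ∀ k, 0 < a k)
    (A : ℕ)
    (S : Fin n → Ω → ℕ)
    (hS : ∀ (i : Fin n) (ω : Ω), S i ω =
      ∑ j ∈ Finset.univ.filter
        (fun j : Fin n => j ≠ i ∧ c i ω / (a i : ℝ) < c j ω / (a j : ℝ)), a j)
    (x : Fin n → ℝ → Ω → ℝ)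
    (hx : ∀ (i : Fin n) (b : ℝ) (ω : Ω), x i b ω =
      if 0 < c i ω then min 1 (max 0 ((b - (S i ω : ℝ)) / (a i : ℝ))) else 0) :
    ∀ i : Fin n, ∀ b : ℕ, 1 ≤ b → b ≤ A →
      (∫ ω, x i (b : ℝ) ω ∂μ) - (∫ ω, x i ((b : ℝ) - 1) ω ∂μ) =
        (1 / (a i : ℝ)) *
          ∑ r ∈ Finset.Icc 1 (a i),
            (μ {ω | 0 < c i ω ∧ S i ω + r = b}).toReal := by
  intro i b _ _
  have hpos : MeasurableSet {ω | 0 < c i ω} := measurableSet_lt measurable_const (hmeas i)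
  have hSi : Measurable (S i) :=
    funext (hS i) ▸ measurable_sum_filter_lt (fun j => (hmeas j).div_const (a j : ℝ)) i a
  have hE : ∀ r : ℕ, MeasurableSet {ω | 0 < c i ω ∧ S i ω + r = b} := fun r =>
    hpos.inter (hSi (measurableSet_singleton _ |>.preimage (measurable_id.add_const r)))
  have hint : ∀ t : ℝ, Integrable (x i t) μ := by
    intro t
    refine Integrable.of_bound ?_ 1 (ae_of_all _ fun ω => ?_)
    · rw [funext (hx i t)]
      exact (Measurable.ite hpos (by fun_prop) measurable_const).aestronglyMeasurable
    · rw [hx, Real.norm_eq_abs]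
      split_ifs
      exacts [abs_min_one_max_zero_le_one _, by simp]
  have hstep : ∀ ω, x i b ω - x i (b - 1) ω =
      1 / a i * ∑ r ∈ Finset.Icc 1 (a i), {ω | 0 < c i ω ∧ S i ω + r = b}.indicator 1 ω := by
    intro ω
    rw [hx, hx]
    by_cases hc : 0 < c i ω
    · simp only [Set.indicator_apply, Set.mem_ofPred_eq, hc, if_true, true_and, Pi.one_apply]
      exact ramp_sub_ramp_sub_one _ _ (ha i)
    · simp [hc]
  rw [← integral_sub (hint _) (hint _), funext hstep, integral_const_mul,
    integral_finsetSum _ fun r _ => (integrable_const 1).indicator (hE r)]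
  simp only [integral_indicator_one (hE _), measureReal_def]

/-- For the stochastic bilevel continuous knapsack problem with integer item sizes,
the increase of the expected amount of item `i` when raising the capacity from
`b−1` to `b` equals `(1/aᵢ) Σ_{r=1}^{aᵢ} ℙ(cᵢ > 0 ∧ Sᵢ = b − r)`, where `Sᵢ` is the
total size of the items preferred over item `i`. -/
theorem stmt_8 {Ω : Type*} [MeasurableSpace Ω] (μ : Measure Ω) [IsProbabilityMeasure μ]
    (n : ℕ) (c : Fin n → Ω → ℝ) (hmeas : ∀ k, Measurable (c k))
    (a : Fin n → ℕ) (ha : ∀ k, 0 < a k)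
    (A : ℕ) (hA : A = ∑ k, a k)
    (h0 : ∀ k, μ {ω | c k ω = 0} = 0)
    (hne : ∀ k l : Fin n, k ≠ l →
      μ {ω | c k ω / (a k : ℝ) = c l ω / (a l : ℝ)} = 0)
    (S : Fin n → Ω → ℕ)
    (hS : ∀ (i : Fin n) (ω : Ω), S i ω =
      ∑ j ∈ Finset.univ.filter
        (fun j : Fin n => j ≠ i ∧ c i ω / (a i : ℝ) < c j ω / (a j : ℝ)), a j)
    (x : Fin n → ℝ → Ω → ℝ)
    (hx : ∀ (i : Fin n) (b : ℝ) (ω : Ω), x i b ω =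
      if 0 < c i ω then min 1 (max 0 ((b - (S i ω : ℝ)) / (a i : ℝ))) else 0) :
    ∀ i : Fin n, ∀ b : ℕ, 1 ≤ b → b ≤ A →
      (∫ ω, x i (b : ℝ) ω ∂μ) - (∫ ω, x i ((b : ℝ) - 1) ω ∂μ) =
        (1 / (a i : ℝ)) *
          ∑ r ∈ Finset.Icc 1 (a i),
            (μ {ω | 0 < c i ω ∧ S i ω + r = b}).toReal :=
  stmt_8_general μ n c hmeas a ha A S hS x hx
end

section
/- Let c₁,…,cₙ be independent real-valued random variables and let a₁,…,aₙ be positive integers. Let i ∈ {1,…,n}, I ⊆ {1,…,n}∖{i}, b ∈ ℤ, and let J ⊆ ℝ be an interval such that for every j ∈ I the function γ ↦ ℙ(c_j/a_j > γ/a_i) is affine on J. Then there exists a polynomial p of degree at most |I| such that h_i(b, I, γ) = p(γ) for all γ ∈ J. -/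
open MeasureTheory ProbabilityTheory

/-!
Condition on the event of item `j`: the weighted count over `insert j s` equals `b` exactly when
either `j` is counted and the count over `s` is `b - w j`, or `j` is not counted and the count over
`s` is `b`. Independence turns this into `h(insert j s) = π_j h(s, b - w j) + (1 - π_j) h(s, b)`,
so each new item whose probability `π_j` is affine in `γ` raises the degree by at most one.
-/

namespace ProbabilityTheory

variable {Ω ι : Type*}

/-- With `E k = {ω | γ / a i < c k ω / a k}` and `w = a`, the event `weightedCount E w I = b` is
the one whose probability is `h_i(b, I, γ)`. -/
noncomputable def weightedCount (E : ι → Set Ω) (w : ι → ℤ) (s : Finset ι) (ω : Ω) : ℤ :=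
  ∑ k ∈ s, (E k).indicator (fun _ => w k) ω

section Count

variable (E : ι → Set Ω) (w : ι → ℤ)

@[simp]
lemma weightedCount_empty : weightedCount E w ∅ = 0 := by
  ext ω
  simp [weightedCount]

lemma setOf_weightedCount_insert_eq [DecidableEq ι] {j : ι} {s : Finset ι} (hj : j ∉ s) (b : ℤ) :
    {ω | weightedCount E w (insert j s) ω = b} =
      (E j ∩ {ω | weightedCount E w s ω = b - w j}) ∪
        ((E j)ᶜ ∩ {ω | weightedCount E w s ω = b}) := by
  ext ω
  by_cases hω : ω ∈ E j
  · simp [weightedCount, Finset.sum_insert hj, hω]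
    omega
  · simp [weightedCount, Finset.sum_insert hj, hω]

lemma measurable_weightedCount {m : MeasurableSpace Ω} (s : Finset ι)
    (hE : ∀ k ∈ s, MeasurableSet[m] (E k)) :
    Measurable[m] (weightedCount E w s) :=
  Finset.measurable_sum s fun k hk => measurable_const.indicator (hE k hk)

end Count

variable [MeasurableSpace Ω] {μ : Measure Ω}

lemma iIndepFun.iIndepSet_preimage {β : Type*} [MeasurableSpace β] {X : ι → Ω → β}
    (hind : iIndepFun X μ) (hX : ∀ k, Measurable (X k)) {S : ι → Set β}
    (hS : ∀ k, MeasurableSet (S k)) :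
    iIndepSet (fun k => X k ⁻¹' S k) μ :=
  (iIndepSet_iff_meas_biInter fun k => hX k (hS k)).2 fun s =>
    hind.measure_inter_preimage_eq_mul s fun k _ => hS k

lemma Indep.measureReal_inter_eq_mul {m₁ m₂ : MeasurableSpace Ω} (h : Indep m₁ m₂ μ)
    {t₁ t₂ : Set Ω} (h₁ : MeasurableSet[m₁] t₁) (h₂ : MeasurableSet[m₂] t₂) :
    μ.real (t₁ ∩ t₂) = μ.real t₁ * μ.real t₂ := by
  simp [Measure.real, (Indep_iff _ _ μ).1 h t₁ t₂ h₁ h₂]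

variable [IsProbabilityMeasure μ] (w : ι → ℤ)

lemma measureReal_weightedCount_insert [DecidableEq ι] {E : ι → Set Ω}
    (hE : ∀ k, MeasurableSet (E k)) (hind : iIndepSet E μ) {j : ι} {s : Finset ι} (hj : j ∉ s)
    (b : ℤ) :
    μ.real {ω | weightedCount E w (insert j s) ω = b} =
      μ.real (E j) * μ.real {ω | weightedCount E w s ω = b - w j} +
        (1 - μ.real (E j)) * μ.real {ω | weightedCount E w s ω = b} := by
  have hindep := hind.indep_generateFrom_of_disjoint hE {j} s (by simpa using hj)
  have hEj : MeasurableSet[MeasurableSpace.generateFrom {t | ∃ n ∈ ({j} : Set ι), E n = t}]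
      (E j) := MeasurableSpace.measurableSet_generateFrom ⟨j, Set.mem_singleton j, rfl⟩
  have hcount (b' : ℤ) : MeasurableSet[MeasurableSpace.generateFrom
      {t | ∃ k ∈ (s : Set ι), E k = t}] {ω | weightedCount E w s ω = b'} :=
    measurable_weightedCount E w s
      (fun k hk => MeasurableSpace.measurableSet_generateFrom (by exact ⟨k, hk, rfl⟩))
      (measurableSet_singleton b')
  have hmeas (b' : ℤ) : MeasurableSet {ω | weightedCount E w s ω = b'} :=
    measurable_weightedCount E w s (fun k _ => hE k) (measurableSet_singleton b')
  rw [setOf_weightedCount_insert_eq E w hj, measureReal_union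
      (Disjoint.mono Set.inter_subset_left Set.inter_subset_left disjoint_compl_right)
      ((hE j).compl.inter (hmeas b)),
    hindep.measureReal_inter_eq_mul hEj (hcount _),
    hindep.measureReal_inter_eq_mul hEj.compl (hcount _), probReal_compl_eq_one_sub (hE j)]

open Polynomial in
theorem exists_polynomial_measureReal_weightedCount_eq {E : ℝ → ι → Set Ω} {J : Set ℝ}
    (hE : ∀ γ ∈ J, ∀ k, MeasurableSet (E γ k)) (hind : ∀ γ ∈ J, iIndepSet (E γ) μ)
    (s : Finset ι) (haff : ∀ k ∈ s, ∃ α β : ℝ, ∀ γ ∈ J, μ.real (E γ k) = α * γ + β) (b : ℤ) :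
    ∃ p : Polynomial ℝ, p.natDegree ≤ s.card ∧
      ∀ γ ∈ J, μ.real {ω | weightedCount (E γ) w s ω = b} = p.eval γ := by
  classical
  induction s using Finset.induction_on generalizing b with
  | empty => exact ⟨C (μ.real {_ω : Ω | (0 : ℤ) = b}), by simp, fun γ _ => by simp⟩
  | @insert j s hj ih =>
    obtain ⟨α, β, hπ⟩ := haff j (Finset.mem_insert_self j s)
    have haff' := fun k hk => haff k (Finset.mem_insert_of_mem hk)
    obtain ⟨p₁, hp₁, hp₁J⟩ := ih haff' (b - w j)
    obtain ⟨p₂, hp₂, hp₂J⟩ := ih haff' b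
    refine ⟨(C α * X + C β) * p₁ + (C (-α) * X + C (1 - β)) * p₂, ?_, fun γ hγ => ?_⟩
    · rw [Finset.card_insert_of_notMem hj]
      refine (natDegree_add_le _ _).trans (max_le ?_ ?_) <;>
        refine natDegree_mul_le.trans ?_ <;> linarith [natDegree_linear_le (a := α) (b := β),
          natDegree_linear_le (a := -α) (b := 1 - β)]
    · rw [measureReal_weightedCount_insert w (hE γ hγ) (hind γ hγ) hj, hπ γ hγ, hp₁J γ hγ,
        hp₂J γ hγ]
      simp only [eval_add, eval_mul, eval_C, eval_X]
      ring

end ProbabilityTheory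

theorem stmt_9_general {Ω : Type*} [MeasurableSpace Ω] (μ : Measure Ω) [IsProbabilityMeasure μ]
    (n : ℕ) (c : Fin n → Ω → ℝ) (hmeas : ∀ k, Measurable (c k))
    (hind : iIndepFun c μ)
    (a : Fin n → ℕ)
    (i : Fin n) (I : Finset (Fin n)) (b : ℤ)
    (J : Set ℝ)
    (haff : ∀ j ∈ I, ∃ α β : ℝ, ∀ γ ∈ J,
      (μ {ω | γ / (a i : ℝ) < c j ω / (a j : ℝ)}).toReal = α * γ + β) :
    ∃ p : Polynomial ℝ, p.natDegree ≤ I.card ∧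
      ∀ γ ∈ J,
        (μ {ω | ∑ k ∈ I.filter (fun k => γ / (a i : ℝ) < c k ω / (a k : ℝ)),
          (a k : ℤ) = b}).toReal = p.eval γ := by
  have hS (γ : ℝ) (k : Fin n) : MeasurableSet {x : ℝ | γ / (a i : ℝ) < x / (a k : ℝ)} :=
    measurableSet_lt measurable_const (measurable_id.div_const _)
  obtain ⟨p, hdeg, hp⟩ := exists_polynomial_measureReal_weightedCount_eq (μ := μ)
    (E := fun γ k => c k ⁻¹' {x | γ / (a i : ℝ) < x / (a k : ℝ)}) (fun k => (a k : ℤ))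
    (fun γ _ k => hmeas k (hS γ k)) (fun γ _ => hind.iIndepSet_preimage hmeas (hS γ)) I haff b
  refine ⟨p, hdeg, fun γ hγ => ?_⟩
  rw [← hp γ hγ]
  simp only [weightedCount, Finset.sum_filter, Measure.real]
  rfl

/-- If, on an interval `J`, the probabilities `γ ↦ ℙ(c_j/a_j > γ/a_i)` are affine
for all `j ∈ I`, then `γ ↦ h_i(b, I, γ) = ℙ(Σ_{j ∈ I, c_j/a_j > γ/a_i} a_j = b)`
agrees on `J` with a polynomial of degree at most `|I|`. -/
theorem stmt_9 {Ω : Type*} [MeasurableSpace Ω] (μ : Measure Ω) [IsProbabilityMeasure μ]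
    (n : ℕ) (c : Fin n → Ω → ℝ) (hmeas : ∀ k, Measurable (c k))
    (hind : iIndepFun c μ)
    (a : Fin n → ℕ) (ha : ∀ k, 0 < a k)
    (i : Fin n) (I : Finset (Fin n)) (hiI : i ∉ I) (b : ℤ)
    (J : Set ℝ) (hJ : J.OrdConnected)
    (haff : ∀ j ∈ I, ∃ α β : ℝ, ∀ γ ∈ J,
      (μ {ω | γ / (a i : ℝ) < c j ω / (a j : ℝ)}).toReal = α * γ + β) :
    ∃ p : Polynomial ℝ, p.natDegree ≤ I.card ∧
      ∀ γ ∈ J,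
        (μ {ω | ∑ k ∈ I.filter (fun k => γ / (a i : ℝ) < c k ω / (a k : ℝ)),
          (a k : ℤ) = b}).toReal = p.eval γ :=
  stmt_9_general μ n c hmeas hind a i I b J haff
end

section
/- Let F : ℝ → ℝ be nondecreasing, right-continuous, with lim_{x→−∞} F(x) = 0 and lim_{x→∞} F(x) = 1, and let m ≥ 1 be an integer. For p ∈ (0,1) define Q(p) := inf{x ∈ ℝ : p ≤ F(x)}, and define G : ℝ → ℝ by G(x) := (1/m) · #{k ∈ {1,…,m} : Q((k − 1/2)/m) ≤ x}. Then |F(x) − G(x)| ≤ 1/(2m) for all x ∈ ℝ. -/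
open Filter Set

/-!
For `p ∈ (0,1)`, right-continuity of `F` gives the Galois connection `Q p ≤ x ↔ p ≤ F x`.
Hence `G x` counts the grid points `(k - 1/2)/m` lying below `F x`, i.e. `G = U ∘ F` where `U`
is the distribution function of the uniform distribution on `{(k - 1/2)/m}`. On `[0, 1]`,
`U t = ⌊m t + 1/2⌋ / m` is `m t` rounded to the nearest integer, divided by `m`, so it is within
`1/(2m)` of `t`.
-/

theorem csInf_setOf_le_apply_le_iff {α β : Type*} [ConditionallyCompleteLinearOrder α]
    [TopologicalSpace α] [OrderTopology α] [TopologicalSpace β] [Preorder β]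
    [OrderClosedTopology β] {F : α → β} (hmono : Monotone F)
    (hrc : ∀ x, ContinuousWithinAt F (Ici x) x) {p : β} (hne : {y | p ≤ F y}.Nonempty)
    (hbdd : BddBelow {y | p ≤ F y}) (x : α) :
    sInf {y | p ≤ F y} ≤ x ↔ p ≤ F x := by
  refine ⟨fun h => le_trans ?_ (hmono h), fun h => csInf_le hbdd h⟩
  have hsub : {y | p ≤ F y} ⊆ Ici (sInf {y | p ≤ F y}) := fun y hy => csInf_le hbdd hy
  exact continuousWithinAt_const.closure_le (csInf_mem_closure hne hbdd)
    ((hrc _).mono hsub) fun y hy => hy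

theorem Real.csInf_setOf_le_apply_le_iff_of_tendsto {F : ℝ → ℝ} (hmono : Monotone F)
    (hrc : ∀ x, ContinuousWithinAt F (Ici x) x) (hbot : Tendsto F atBot (nhds 0))
    (htop : Tendsto F atTop (nhds 1)) {p : ℝ} (hp : p ∈ Ioo (0 : ℝ) 1) (x : ℝ) :
    sInf {y | p ≤ F y} ≤ x ↔ p ≤ F x := by
  refine csInf_setOf_le_apply_le_iff hmono hrc ?_ ?_ x
  · obtain ⟨y, hy⟩ := (htop.eventually (eventually_gt_nhds hp.2)).exists
    exact ⟨y, hy.le⟩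
  · obtain ⟨x₀, hx₀⟩ := eventually_atBot.1 (hbot.eventually (eventually_lt_nhds hp.1))
    refine ⟨x₀, fun y hy => le_of_not_gt fun hlt => ?_⟩
    exact (hx₀ y hlt.le).not_ge hy

theorem card_filter_sub_half_div_le_eq_floor {m : ℕ} (hm : 0 < m) {t : ℝ} (ht : t ≤ 1) :
    ((Finset.Icc 1 m).filter fun k : ℕ => ((k : ℝ) - 1 / 2) / m ≤ t).card
      = ⌊m * t + 1 / 2⌋₊ := by
  have hm' : (0 : ℝ) < m := Nat.cast_pos.2 hm
  have hfloor : ⌊m * t + 1 / 2⌋₊ ≤ m := by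
    have : m * t + 1 / 2 < ((m + 1 : ℕ) : ℝ) := by push_cast; nlinarith
    have := Nat.floor_lt' (Nat.succ_ne_zero m) |>.2 this
    omega
  suffices h : (Finset.Icc 1 m).filter (fun k : ℕ => ((k : ℝ) - 1 / 2) / m ≤ t)
      = Finset.Icc 1 ⌊m * t + 1 / 2⌋₊ by
    rw [h, Nat.card_Icc, Nat.add_sub_cancel]
  ext k
  simp only [Finset.mem_filter, Finset.mem_Icc, div_le_iff₀ hm']
  constructor
  · rintro ⟨⟨hk1, -⟩, hk⟩
    exact ⟨hk1, (Nat.le_floor_iff' (by omega)).2 (by linarith)⟩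
  · rintro ⟨hk1, hk⟩
    exact ⟨⟨hk1, hk.trans hfloor⟩, by linarith [(Nat.le_floor_iff' (by omega)).1 hk]⟩

theorem abs_sub_floor_add_half_div_le {m : ℕ} (hm : 0 < m) {t : ℝ} (ht : 0 ≤ t) :
    |t - (1 / m) * ⌊m * t + 1 / 2⌋₊| ≤ 1 / (2 * m) := by
  have hm' : (0 : ℝ) < m := Nat.cast_pos.2 hm
  have hle := Nat.floor_le (a := m * t + 1 / 2) (by positivity)
  have hlt := Nat.lt_floor_add_one (m * t + 1 / 2)
  have hround : |m * t - ⌊m * t + 1 / 2⌋₊| ≤ 1 / 2 := abs_le.2 ⟨by linarith, by linarith⟩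
  calc |t - (1 / m) * ⌊m * t + 1 / 2⌋₊| = |m * t - ⌊m * t + 1 / 2⌋₊| / m := by
        rw [← abs_of_pos hm', ← abs_div, abs_of_pos hm']
        congr 1
        field_simp
    _ ≤ 1 / 2 / m := by gcongr
    _ = 1 / (2 * m) := by rw [div_div]

/-- The cumulative distribution function `G` of the uniform distribution on the
`m` quantile points `Q((k − 1/2)/m)`, `k = 1,…,m`, approximates the original
cumulative distribution function `F` uniformly within `1/(2m)`. -/
theorem stmt_11 (F : ℝ → ℝ) (hmono : Monotone F)
    (hrc : ∀ x : ℝ, ContinuousWithinAt F (Set.Ici x) x)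
    (hbot : Filter.Tendsto F Filter.atBot (nhds 0))
    (htop : Filter.Tendsto F Filter.atTop (nhds 1))
    (m : ℕ) (hm : 1 ≤ m)
    (Q : ℝ → ℝ) (hQ : ∀ p : ℝ, p ∈ Set.Ioo (0 : ℝ) 1 → Q p = sInf {x : ℝ | p ≤ F x})
    (G : ℝ → ℝ)
    (hG : ∀ x : ℝ, G x = (1 / (m : ℝ)) *
      ((Finset.Icc 1 m).filter
        (fun k : ℕ => Q (((k : ℝ) - 1 / 2) / (m : ℝ)) ≤ x)).card) :
    ∀ x : ℝ, |F x - G x| ≤ 1 / (2 * (m : ℝ)) := by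
  intro x
  have hm' : (1 : ℝ) ≤ m := Nat.one_le_cast.2 hm
  have hgrid : ∀ k ∈ Finset.Icc 1 m, (((k : ℝ) - 1 / 2) / m) ∈ Ioo (0 : ℝ) 1 := by
    intro k hk
    have hk1 : (1 : ℝ) ≤ k := Nat.one_le_cast.2 (Finset.mem_Icc.1 hk).1
    have hkm : (k : ℝ) ≤ m := Nat.cast_le.2 (Finset.mem_Icc.1 hk).2
    exact ⟨div_pos (by linarith) (by linarith), (div_lt_one (by linarith)).2 (by linarith)⟩
  have hcount : (Finset.Icc 1 m).filter (fun k : ℕ => Q (((k : ℝ) - 1 / 2) / m) ≤ x)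
      = (Finset.Icc 1 m).filter (fun k : ℕ => ((k : ℝ) - 1 / 2) / m ≤ F x) :=
    Finset.filter_congr fun k hk => by
      rw [hQ _ (hgrid k hk), Real.csInf_setOf_le_apply_le_iff_of_tendsto hmono hrc hbot htop
        (hgrid k hk)]
  rw [hG, hcount, card_filter_sub_half_div_le_eq_floor hm (hmono.ge_of_tendsto htop x)]
  exact abs_sub_floor_add_half_div_le hm (hmono.le_of_tendsto hbot x)
end

section
/- Let n ∈ ℕ, let a ∈ ℝⁿ with aᵢ > 0, and let c ∈ ℝⁿ. Append an item n+1 with size a_{n+1} = 1 and value c_{n+1} > 0 satisfying c_{n+1} > cᵢ/aᵢ for all i ∈ {1,…,n}. Then for every b with 1 ≤ b ≤ 1 + Σ_{i=1}^n aᵢ, the optimal value of the extended continuous knapsack problem max{Σ_{i=1}^{n+1} cᵢxᵢ : Σ_{i=1}^{n+1} aᵢxᵢ ≤ b, x ∈ [0,1]^{n+1}} equals c_{n+1} + max{cᵀy : aᵀy ≤ b − 1, y ∈ [0,1]ⁿ}, and there is an optimal solution of the extended problem with x_{n+1} = 1. -/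
/-!
Let `v` be the optimal value with capacity `b - 1`; it is attained, by compactness. Packing the
new item fully on top of an optimal solution gives `c_{n+1} + v`. Conversely, for a feasible
`(x, t)` with `A = Σ aᵢxᵢ ≤ (b - 1) + (1 - t)`, split `x = λx + (1 - λ)x` so that `λx` fits into
capacity `b - 1` and `(1 - λ)A ≤ 1 - t`. The first part earns at most `v`; the second earns at
most `c_{n+1}(1 - λ)A ≤ c_{n+1}(1 - t)`, since every original item has profit ratio below
`c_{n+1}`. Hence the value of `(x, t)` is at most `v + c_{n+1}`.
-/

open Finset

section Knapsack

variable {ι : Type*} [Fintype ι]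

def knapsackValues (a c : ι → ℝ) (b : ℝ) : Set ℝ :=
  {r | ∃ y : ι → ℝ, (∀ i, y i ∈ Set.Icc (0 : ℝ) 1) ∧ ∑ i, a i * y i ≤ b ∧ r = ∑ i, c i * y i}

lemma knapsackValues_eq_image (a c : ι → ℝ) (b : ℝ) :
    knapsackValues a c b =
      (fun y : ι → ℝ => ∑ i, c i * y i) '' (Set.Icc 0 1 ∩ {y | ∑ i, a i * y i ≤ b}) := by
  ext r
  simp only [knapsackValues, Set.mem_ofPred_eq, Set.mem_image, Set.mem_inter_iff, Set.mem_Icc,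
    Pi.le_def, forall_and]
  constructor
  · rintro ⟨y, hy, hb, rfl⟩
    exact ⟨y, ⟨hy, hb⟩, rfl⟩
  · rintro ⟨y, ⟨hy, hb⟩, rfl⟩
    exact ⟨y, hy, hb, rfl⟩

lemma knapsackValues_exists_isGreatest (a c : ι → ℝ) {b : ℝ} (hb : 0 ≤ b) :
    ∃ v, IsGreatest (knapsackValues a c b) v := by
  rw [knapsackValues_eq_image]
  have hcompact : IsCompact (Set.Icc (0 : ι → ℝ) 1 ∩ {y | ∑ i, a i * y i ≤ b}) :=
    isCompact_Icc.inter_right (isClosed_le (by fun_prop) continuous_const)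
  have hzero : (0 : ι → ℝ) ∈ Set.Icc (0 : ι → ℝ) 1 ∩ {y | ∑ i, a i * y i ≤ b} :=
    ⟨Set.left_mem_Icc.mpr zero_le_one, by simpa using hb⟩
  exact (hcompact.image (by fun_prop)).exists_isGreatest (Set.Nonempty.image _ ⟨0, hzero⟩)

lemma smul_mem_knapsackValues {a c x : ι → ℝ} {b l : ℝ} (hx : ∀ i, x i ∈ Set.Icc (0 : ℝ) 1)
    (hl : l ∈ Set.Icc (0 : ℝ) 1) (hlb : l * ∑ i, a i * x i ≤ b) :
    l * ∑ i, c i * x i ∈ knapsackValues a c b := by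
  refine ⟨fun i => l * x i, fun i => ⟨mul_nonneg hl.1 (hx i).1, mul_le_one₀ hl.2 (hx i).1 (hx i).2⟩,
    ?_, ?_⟩
  · calc ∑ i, a i * (l * x i) = l * ∑ i, a i * x i := by rw [mul_sum]; congr 1; ext; ring
      _ ≤ b := hlb
  · rw [mul_sum]; congr 1; ext; ring

end Knapsack

lemma sum_mul_le_mul_sum_of_le_mul {ι : Type*} (s : Finset ι) {a c x : ι → ℝ} {k : ℝ}
    (hc : ∀ i ∈ s, c i ≤ k * a i) (hx : ∀ i ∈ s, 0 ≤ x i) :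
    ∑ i ∈ s, c i * x i ≤ k * ∑ i ∈ s, a i * x i := by
  rw [mul_sum]
  refine sum_le_sum fun i hi => ?_
  rw [← mul_assoc]
  exact mul_le_mul_of_nonneg_right (hc i hi) (hx i hi)

lemma exists_mul_le_and_one_sub_mul_le {A s u : ℝ} (hA : 0 ≤ A) (hs : 0 ≤ s) (hu : 0 ≤ u)
    (hAsu : A ≤ s + u) :
    ∃ l ∈ Set.Icc (0 : ℝ) 1, l * A ≤ s ∧ (1 - l) * A ≤ u := by
  rcases le_or_gt A s with hAs | hsA
  · exact ⟨1, ⟨zero_le_one, le_rfl⟩, by linarith, by simpa using hu⟩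
  · have hApos : 0 < A := hs.trans_lt hsA
    refine ⟨s / A, ⟨div_nonneg hs hA, (div_le_one hApos).mpr hsA.le⟩, ?_, ?_⟩
    · rw [div_mul_cancel₀ _ hApos.ne']
    · rw [sub_mul, div_mul_cancel₀ _ hApos.ne']
      linarith

theorem stmt_14_general (n : ℕ) (a c : Fin n → ℝ) (ha : ∀ i, 0 < a i)
    (cN : ℝ) (hcN : 0 < cN) (hcNr : ∀ i, c i / a i < cN)
    (b : ℝ) (hb1 : 1 ≤ b) :
    ∃ v : ℝ,
      IsGreatest {r : ℝ | ∃ y : Fin n → ℝ,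
        (∀ i, y i ∈ Set.Icc (0 : ℝ) 1) ∧ ∑ i, a i * y i ≤ b - 1 ∧
          r = ∑ i, c i * y i} v ∧
      IsGreatest {r : ℝ | ∃ (x : Fin n → ℝ) (t : ℝ),
        (∀ i, x i ∈ Set.Icc (0 : ℝ) 1) ∧ t ∈ Set.Icc (0 : ℝ) 1 ∧
          (∑ i, a i * x i) + 1 * t ≤ b ∧
          r = (∑ i, c i * x i) + cN * t} (cN + v) ∧
      ∃ (x : Fin n → ℝ) (t : ℝ),
        (∀ i, x i ∈ Set.Icc (0 : ℝ) 1) ∧ t ∈ Set.Icc (0 : ℝ) 1 ∧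
          (∑ i, a i * x i) + 1 * t ≤ b ∧ t = 1 ∧
          (∑ i, c i * x i) + cN * t = cN + v := by
  obtain ⟨v, hv⟩ := knapsackValues_exists_isGreatest a c (sub_nonneg.mpr hb1)
  obtain ⟨⟨y, hy, hyb, rfl⟩, hvub⟩ := id hv
  have hpack : ∑ i, a i * y i + 1 * 1 ≤ b := by linarith
  refine ⟨_, hv, ⟨⟨y, 1, hy, ⟨zero_le_one, le_rfl⟩, hpack, by ring⟩, ?_⟩,
    y, 1, hy, ⟨zero_le_one, le_rfl⟩, hpack, rfl, by ring⟩
  rintro _ ⟨x, t, hx, ht, hxt, rfl⟩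
  have hratio : ∀ i ∈ univ, c i ≤ cN * a i := fun i _ => ((div_lt_iff₀ (ha i)).mp (hcNr i)).le
  have hA : 0 ≤ ∑ i, a i * x i := sum_nonneg fun i _ => mul_nonneg (ha i).le (hx i).1
  obtain ⟨l, hl, hlA, hlA'⟩ :=
    exists_mul_le_and_one_sub_mul_le hA (sub_nonneg.mpr hb1) (sub_nonneg.mpr ht.2)
      (by linarith : _ ≤ b - 1 + (1 - t))
  have hfit := hvub (smul_mem_knapsackValues (c := c) hx hl hlA)
  have hrest : (1 - l) * ∑ i, c i * x i ≤ cN * (1 - t) :=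
    calc (1 - l) * ∑ i, c i * x i ≤ (1 - l) * (cN * ∑ i, a i * x i) :=
          mul_le_mul_of_nonneg_left (sum_mul_le_mul_sum_of_le_mul _ hratio fun i _ => (hx i).1)
            (sub_nonneg.mpr hl.2)
      _ = cN * ((1 - l) * ∑ i, a i * x i) := by ring
      _ ≤ cN * (1 - t) := mul_le_mul_of_nonneg_left hlA' hcN.le
  linarith

/-- Appending an item of size `1` whose profit ratio `c_{n+1}` strictly exceeds
all original profit ratios: for every capacity `1 ≤ b ≤ 1 + Σ aᵢ`, the optimal
value of the extended continuous knapsack problem equals `c_{n+1}` plus the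
optimal value of the original problem with capacity `b − 1`, and some optimal
solution of the extended problem fully packs the new item. -/
theorem stmt_14 (n : ℕ) (a c : Fin n → ℝ) (ha : ∀ i, 0 < a i)
    (cN : ℝ) (hcN : 0 < cN) (hcNr : ∀ i, c i / a i < cN)
    (b : ℝ) (hb1 : 1 ≤ b) (hb2 : b ≤ 1 + ∑ i, a i) :
    ∃ v : ℝ,
      IsGreatest {r : ℝ | ∃ y : Fin n → ℝ,
        (∀ i, y i ∈ Set.Icc (0 : ℝ) 1) ∧ ∑ i, a i * y i ≤ b - 1 ∧
          r = ∑ i, c i * y i} v ∧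
      IsGreatest {r : ℝ | ∃ (x : Fin n → ℝ) (t : ℝ),
        (∀ i, x i ∈ Set.Icc (0 : ℝ) 1) ∧ t ∈ Set.Icc (0 : ℝ) 1 ∧
          (∑ i, a i * x i) + 1 * t ≤ b ∧
          r = (∑ i, c i * x i) + cN * t} (cN + v) ∧
      ∃ (x : Fin n → ℝ) (t : ℝ),
        (∀ i, x i ∈ Set.Icc (0 : ℝ) 1) ∧ t ∈ Set.Icc (0 : ℝ) 1 ∧
          (∑ i, a i * x i) + 1 * t ≤ b ∧ t = 1 ∧
          (∑ i, c i * x i) + cN * t = cN + v :=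
  stmt_14_general n a c ha cN hcN hcNr b hb1
end
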